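/- arXiv:2512.20133 — 8 statements merged into one kernel-verified Lean document; each statement's English description precedes it below -/
import Mathlib

section
/- Let X and Y be positive semidefinite complex matrices of the same size such that the range (column space) of X is contained in the range of Y. Then there exists a real number ε > 0 such that Y − εX is positive semidefinite. -/
open scoped ComplexOrder
open Matrix

/-- If `X` and `Y` are positive semidefinite complex matrices of the same size and the range
of `X` is contained in the range of `Y`, then there is `ε > 0` with `Y - ε • X`
positive semidefinite. -/
theorem psd_sub_smul_psd_of_range_le {n : Type*} [Fintype n] [DecidableEq n]
    (X Y : Matrix n n ℂ) (hX : X.PosSemidef) (hY : Y.PosSemidef)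
    (hR : LinearMap.range X.mulVecLin ≤ LinearMap.range Y.mulVecLin) :
    ∃ ε : ℝ, 0 < ε ∧ (Y - (ε : ℂ) • X).PosSemidef := by
  classical
  set U : Matrix n n ℂ := (hY.1.eigenvectorUnitary : Matrix n n ℂ) with hUdef
  set d : n → ℝ := hY.1.eigenvalues with hddef
  have hd0 : ∀ i, 0 ≤ d i := hY.eigenvalues_nonneg
  have hU1 : U * star U = 1 := (Matrix.mem_unitaryGroup_iff).mp hY.1.eigenvectorUnitary.2
  have hU2 : star U * U = 1 := (Matrix.mem_unitaryGroup_iff').mp hY.1.eigenvectorUnitary.2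
  have hspec : Y = U * Matrix.diagonal (fun i => (d i : ℂ)) * star U := by
    exact hY.1.spectral_theorem
  -- kernel inclusion
  have hker : ∀ z : n → ℂ, Y *ᵥ z = 0 → X *ᵥ z = 0 := by
    intro z hz
    rw [← hX.dotProduct_mulVec_zero_iff]
    obtain ⟨u, hu⟩ := hR (LinearMap.mem_range_self X.mulVecLin z)
    simp only [Matrix.mulVecLin_apply] at hu
    rw [← hu, Matrix.dotProduct_mulVec]
    have : star z ᵥ* Y = 0 := by
      rw [← hY.1.eq, ← Matrix.star_mulVec, hz, star_zero]
    rw [this, zero_dotProduct]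
  -- the constant
  set Cb : ℝ := ∑ i, ∑ j, ‖X i j‖ with hCbdef
  have hCb0 : 0 ≤ Cb :=
    Finset.sum_nonneg fun i _ => Finset.sum_nonneg fun j _ => (norm_nonneg _)
  set T : Finset ℝ := (Finset.univ.filter (fun i => d i ≠ 0)).image d with hTdef
  set μ : ℝ := if h : T.Nonempty then T.min' h else 1 with hμdef
  have hμpos : 0 < μ := by
    rw [hμdef]
    split_ifs with h
    · obtain ⟨i, hi, hdi⟩ := Finset.mem_image.mp (T.min'_mem h)
      rw [← hdi]
      exact lt_of_le_of_ne (hd0 i) (Ne.symm (Finset.mem_filter.mp hi).2)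
    · exact one_pos
  have hμle : ∀ i, d i ≠ 0 → μ ≤ d i := by
    intro i hi
    have hmem : d i ∈ T := Finset.mem_image_of_mem d (Finset.mem_filter.mpr ⟨Finset.mem_univ i, hi⟩)
    rw [hμdef]
    rw [dif_pos ⟨d i, hmem⟩]
    exact Finset.min'_le T _ hmem
  set ε : ℝ := μ / (2 * Cb + 1) with hεdef
  have hεpos : 0 < ε := div_pos hμpos (by linarith)
  -- main inequality
  have main : ∀ z : n → ℂ, ε * (star z ⬝ᵥ X *ᵥ z).re ≤ (star z ⬝ᵥ Y *ᵥ z).re := by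
    intro z
    set w : n → ℂ := star U *ᵥ z with hwdef
    set w' : n → ℂ := fun i => if d i = 0 then 0 else w i with hw'def
    set z' : n → ℂ := U *ᵥ w' with hz'def
    -- quadratic form of Y
    have hsw : star z ᵥ* U = star w := by
      rw [hwdef, Matrix.star_mulVec, Matrix.star_eq_conjTranspose,
        Matrix.conjTranspose_conjTranspose]
    have hYquad : star z ⬝ᵥ Y *ᵥ z = ∑ i, (d i : ℂ) * Complex.normSq (w i) := by
      conv_lhs => rw [hspec]
      rw [← Matrix.mulVec_mulVec, ← Matrix.mulVec_mulVec, Matrix.dotProduct_mulVec (star z) U,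
        hsw, ← hwdef]
      simp only [dotProduct, Matrix.mulVec_diagonal, Pi.star_apply]
      refine Finset.sum_congr rfl fun i _ => ?_
      rw [← mul_assoc, mul_comm (star (w i)) _, mul_assoc]
      congr 1
      rw [Complex.star_def, ← Complex.normSq_eq_conj_mul_self]
    -- Y z' = Y z
    have hDw : (Matrix.diagonal fun i => (d i : ℂ)) *ᵥ w'
        = (Matrix.diagonal fun i => (d i : ℂ)) *ᵥ w := by
      funext i
      simp only [Matrix.mulVec_diagonal, hw'def]
      by_cases h : d i = 0 <;> simp [h]
    have hYz' : Y *ᵥ z' = Y *ᵥ z := by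
      have h0 : star U *ᵥ z' = w' := by
        rw [hz'def, Matrix.mulVec_mulVec, hU2, Matrix.one_mulVec]
      conv_lhs => rw [hspec]
      conv_rhs => rw [hspec]
      simp only [← Matrix.mulVec_mulVec]
      rw [h0, ← hwdef, hDw]
    have hXz' : X *ᵥ z' = X *ᵥ z := by
      have : X *ᵥ (z' - z) = 0 := hker _ (by rw [Matrix.mulVec_sub, hYz', sub_self])
      rw [Matrix.mulVec_sub] at this
      linear_combination (norm := module) this
    have hXquad : star z ⬝ᵥ X *ᵥ z = star z' ⬝ᵥ X *ᵥ z' := by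
      rw [← hXz']
      have h2 : star (z - z') ⬝ᵥ X *ᵥ z' = 0 := by
        rw [Matrix.dotProduct_mulVec, ← hX.1.eq, ← Matrix.star_mulVec]
        have : X *ᵥ (z - z') = 0 := hker _ (by rw [Matrix.mulVec_sub, hYz', sub_self])
        rw [this, star_zero, zero_dotProduct]
      have h3 : star z ⬝ᵥ X *ᵥ z' = star z' ⬝ᵥ X *ᵥ z' + star (z - z') ⬝ᵥ X *ᵥ z' := by
        rw [star_sub, sub_dotProduct]
        ring
      rw [h3, h2, add_zero]
    -- norms
    have hz'w' : star z' ⬝ᵥ z' = star w' ⬝ᵥ w' := by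
      rw [hz'def, Matrix.star_mulVec, Matrix.dotProduct_mulVec, Matrix.vecMul_vecMul,
        ← Matrix.star_eq_conjTranspose, hU2, Matrix.vecMul_one]
    set SS : ℝ := ∑ k, Complex.normSq (w' k) with hSSdef
    have hSS0 : 0 ≤ SS := Finset.sum_nonneg fun k _ => Complex.normSq_nonneg _
    have hz'norm : ∑ k, Complex.normSq (z' k) = SS := by
      have h1 : star z' ⬝ᵥ z' = (∑ k, Complex.normSq (z' k) : ℝ) := by
        simp [dotProduct, Complex.normSq_eq_conj_mul_self]
      have h2 : star w' ⬝ᵥ w' = (SS : ℂ) := by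
        simp [dotProduct, hSSdef, Complex.normSq_eq_conj_mul_self]
      have := hz'w'
      rw [h1, h2] at this
      exact_mod_cast this
    -- bound on X quadratic form
    have hbound : (star z' ⬝ᵥ X *ᵥ z').re ≤ 2 * Cb * SS := by
      have h1 : (star z' ⬝ᵥ X *ᵥ z').re ≤ ‖star z' ⬝ᵥ X *ᵥ z'‖ :=
        Complex.re_le_norm _
      refine h1.trans ?_
      have h2 : star z' ⬝ᵥ X *ᵥ z' = ∑ i, ∑ j, star (z' i) * (X i j * z' j) := by
        simp [dotProduct, Matrix.mulVec, Finset.mul_sum]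
      rw [h2]
      calc ‖∑ i, ∑ j, star (z' i) * (X i j * z' j)‖
          ≤ ∑ i, ∑ j, ‖star (z' i) * (X i j * z' j)‖ := by
            refine (norm_sum_le _ _).trans ?_
            exact Finset.sum_le_sum fun i _ => norm_sum_le _ _
        _ ≤ ∑ i, ∑ j, ‖X i j‖ * (2 * SS) := by
            refine Finset.sum_le_sum fun i _ => Finset.sum_le_sum fun j _ => ?_
            rw [norm_mul, norm_mul]
            have hai : ‖star (z' i)‖ = ‖z' i‖ := by
              simp
            rw [hai]
            have hb : ‖z' i‖ * ‖z' j‖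
                ≤ Complex.normSq (z' i) + Complex.normSq (z' j) := by
              rw [← Complex.sq_norm, ← Complex.sq_norm]
              nlinarith [norm_nonneg (z' i), norm_nonneg (z' j),
                sq_nonneg (‖z' i‖ - ‖z' j‖)]
            have hci : Complex.normSq (z' i) ≤ SS := by
              rw [← hz'norm]
              exact Finset.single_le_sum (fun k _ => Complex.normSq_nonneg (z' k))
                (Finset.mem_univ i)
            have hcj : Complex.normSq (z' j) ≤ SS := by
              rw [← hz'norm]
              exact Finset.single_le_sum (fun k _ => Complex.normSq_nonneg (z' k))
                (Finset.mem_univ j)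
            calc ‖z' i‖ * (‖X i j‖ * ‖z' j‖)
                = ‖X i j‖ * (‖z' i‖ * ‖z' j‖) := by ring
              _ ≤ ‖X i j‖ * (2 * SS) := by
                  refine mul_le_mul_of_nonneg_left ?_ (norm_nonneg _)
                  linarith
        _ = 2 * Cb * SS := by
            simp only [← Finset.sum_mul]
            rw [hCbdef]
            ring
    -- lower bound on Y quadratic
    have hYlow : μ * SS ≤ (star z ⬝ᵥ Y *ᵥ z).re := by
      have h1 : (star z ⬝ᵥ Y *ᵥ z).re = ∑ i, d i * Complex.normSq (w i) := by
        rw [hYquad]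
        push_cast
        rw [Complex.re_sum]
        simp
      rw [h1, hSSdef, Finset.mul_sum]
      refine Finset.sum_le_sum fun i _ => ?_
      by_cases h : d i = 0
      · simp [hw'def, h]
      · rw [hw'def]
        simp only [h, if_false]
        exact mul_le_mul_of_nonneg_right (hμle i h) (Complex.normSq_nonneg _)
    -- combine
    have hXre : (star z ⬝ᵥ X *ᵥ z).re ≤ 2 * Cb * SS := by rw [hXquad]; exact hbound
    have hε2 : ε * (2 * Cb * SS) ≤ μ * SS := by
      rw [hεdef]
      rw [div_mul_eq_mul_div, div_le_iff₀ (by linarith : (0:ℝ) < 2 * Cb + 1)]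
      nlinarith
    have hXnn : 0 ≤ (star z ⬝ᵥ X *ᵥ z).re := by
      have := hX.dotProduct_mulVec_nonneg z
      rw [Complex.le_def] at this
      exact this.1
    calc ε * (star z ⬝ᵥ X *ᵥ z).re ≤ ε * (2 * Cb * SS) :=
          mul_le_mul_of_nonneg_left hXre hεpos.le
      _ ≤ μ * SS := hε2
      _ ≤ (star z ⬝ᵥ Y *ᵥ z).re := hYlow
  -- assemble
  refine ⟨ε, hεpos, Matrix.posSemidef_iff_dotProduct_mulVec.mpr ⟨?_, ?_⟩⟩
  · have hsm : ((ε : ℂ) • X).IsHermitian := by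
      rw [Matrix.IsHermitian, Matrix.conjTranspose_smul, hX.1.eq]
      congr 1
      simp
    exact hY.1.sub hsm
  · intro z
    rw [Matrix.sub_mulVec, dotProduct_sub, Matrix.smul_mulVec,
      dotProduct_smul]
    have hXz := hX.dotProduct_mulVec_nonneg z
    have hYz := hY.dotProduct_mulVec_nonneg z
    rw [Complex.le_def] at hXz hYz ⊢
    constructor
    · simp only [Complex.sub_re, Complex.zero_re, smul_eq_mul, Complex.mul_re,
        Complex.ofReal_re, Complex.ofReal_im]
      have := main z
      simp only [Complex.zero_re, Complex.zero_im] at hXz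
      rw [← hXz.2]
      simp only [mul_zero, zero_mul, sub_zero]
      linarith
    · simp only [Complex.sub_im, Complex.zero_im, smul_eq_mul, Complex.mul_im,
        Complex.ofReal_re, Complex.ofReal_im]
      simp only [Complex.zero_re, Complex.zero_im] at hXz hYz
      rw [← hXz.2, ← hYz.2]
      ring
end

section
/- Let ρ be a bipartite state on ℂ^m ⊗ ℂ^n (a positive semidefinite complex matrix of trace 1 indexed by Fin m × Fin n) whose first marginal Tr_B ρ equals the rank-one projection |ψ⟩⟨ψ| for some unit vector ψ ∈ ℂ^m. Then ρ = |ψ⟩⟨ψ| ⊗ σ (Kronecker product), where σ = Tr_A ρ is the second marginal of ρ. -/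
noncomputable section
open scoped Kronecker Matrix ComplexOrder

/-- The first marginal `Tr_B ρ` of a bipartite matrix. -/
def margA {m n : ℕ} (ρ : Matrix (Fin m × Fin n) (Fin m × Fin n) ℂ) :
    Matrix (Fin m) (Fin m) ℂ :=
  Matrix.of fun i j => ∑ k, ρ (i, k) (j, k)

/-- The second marginal `Tr_A ρ` of a bipartite matrix. -/
def margB {m n : ℕ} (ρ : Matrix (Fin m × Fin n) (Fin m × Fin n) ℂ) :
    Matrix (Fin n) (Fin n) ℂ :=
  Matrix.of fun k l => ∑ i, ρ (i, k) (i, l)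

lemma psd_trace_zero {N : Type*} [Fintype N] [DecidableEq N] {A : Matrix N N ℂ}
    (hA : A.PosSemidef) (h : A.trace = 0) : A = 0 := by
  obtain ⟨B, rfl⟩ := (by open scoped MatrixOrder Matrix.Norms.L2Operator in exact CStarAlgebra.nonneg_iff_eq_star_mul_self.mp hA.nonneg : ∃ B : Matrix _ _ ℂ, A = Bᴴ * B)
  rw [Matrix.conjTranspose_mul_self_eq_zero]
  have h' : ∑ j, ∑ i, (Complex.normSq (B i j) : ℂ) = 0 := by
    simpa [Matrix.trace, Matrix.diag, Matrix.mul_apply, Matrix.conjTranspose_apply,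
      Complex.normSq_eq_conj_mul_self] using h
  have h'' : ∑ j, ∑ i, Complex.normSq (B i j) = 0 := by exact_mod_cast h'
  ext i j
  have := (Finset.sum_eq_zero_iff_of_nonneg (fun j _ => Finset.sum_nonneg
    (fun i _ => Complex.normSq_nonneg _))).mp h'' j (Finset.mem_univ j)
  have := (Finset.sum_eq_zero_iff_of_nonneg (fun i _ => Complex.normSq_nonneg _)).mp this i
    (Finset.mem_univ i)
  simpa using Complex.normSq_eq_zero.mp this

/-- If the first marginal of a bipartite state `ρ` is the rank-one projection `|ψ⟩⟨ψ|`
for a unit vector `ψ`, then `ρ = |ψ⟩⟨ψ| ⊗ (Tr_A ρ)`. -/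
theorem eq_kronecker_of_pure_marginal {m n : ℕ}
    (ρ : Matrix (Fin m × Fin n) (Fin m × Fin n) ℂ)
    (hpsd : ρ.PosSemidef) (htr : ρ.trace = 1)
    (ψ : Fin m → ℂ) (hψ : ∑ i, Complex.normSq (ψ i) = 1)
    (hmarg : margA ρ = Matrix.vecMulVec ψ (star ψ)) :
    ρ = Matrix.vecMulVec ψ (star ψ) ⊗ₖ margB ρ := by
  classical
  set v : Matrix (Fin m) (Fin m) ℂ := Matrix.vecMulVec ψ (star ψ) with hv
  have hψC : ∑ i, (starRingEnd ℂ) (ψ i) * ψ i = 1 := by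
    have : ((∑ i, Complex.normSq (ψ i) : ℝ) : ℂ) = 1 := by exact_mod_cast hψ
    rw [← this]
    push_cast
    exact Finset.sum_congr rfl fun i _ => by
      rw [Complex.normSq_eq_conj_mul_self]
  have hvherm : v.IsHermitian := by
    ext i j
    simp [hv, Matrix.vecMulVec_apply, Matrix.conjTranspose_apply, mul_comm]
  have hvproj : v * v = v := by
    ext i j
    simp only [hv, Matrix.mul_apply, Matrix.vecMulVec_apply, Pi.star_apply]
    have : ∑ k, ψ i * star (ψ k) * (ψ k * star (ψ j)) =
        ψ i * star (ψ j) * ∑ k, (starRingEnd ℂ) (ψ k) * ψ k := by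
      rw [Finset.mul_sum]
      exact Finset.sum_congr rfl fun k _ => by simp only [RCLike.star_def]; ring
    rw [this, hψC, mul_one]
  set Q : Matrix (Fin m × Fin n) (Fin m × Fin n) ℂ := v ⊗ₖ (1 : Matrix (Fin n) (Fin n) ℂ)
    with hQ
  have hQherm : Q.IsHermitian := by
    ext ⟨i, k⟩ ⟨j, l⟩
    by_cases h : k = l
    · subst h
      simp [hQ, Matrix.conjTranspose_apply, Matrix.kroneckerMap_apply, hv,
        Matrix.vecMulVec_apply, Matrix.one_apply, mul_comm]
    · simp [hQ, Matrix.conjTranspose_apply, Matrix.kroneckerMap_apply,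
        Matrix.one_apply, h, Ne.symm h]
  have hQproj : Q * Q = Q := by
    rw [hQ, ← Matrix.mul_kronecker_mul, hvproj, one_mul]
  set P : Matrix (Fin m × Fin n) (Fin m × Fin n) ℂ := 1 - Q with hP
  have hPherm : P.IsHermitian := (Matrix.isHermitian_one).sub hQherm
  have hPproj : P * P = P := by
    rw [hP]
    simp only [Matrix.sub_mul, Matrix.mul_sub, one_mul, Matrix.mul_one, hQproj]
    abel
  -- trace (Q * ρ) = 1
  have htrQρ : (Q * ρ).trace = 1 := by
    have h1 : (Q * ρ).trace = ∑ i, ∑ j, v i j * (margA ρ) j i := by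
      simp only [Matrix.trace, Matrix.diag, Matrix.mul_apply, hQ, Matrix.kroneckerMap_apply,
        Fintype.sum_prod_type, margA, Matrix.of_apply, Matrix.one_apply]
      refine Finset.sum_congr rfl fun x _ => ?_
      rw [Finset.sum_comm]
      refine Finset.sum_congr rfl fun x2 _ => ?_
      rw [Finset.mul_sum]
      refine Finset.sum_congr rfl fun y _ => ?_
      simp [ite_mul, zero_mul, Finset.sum_ite_eq, Finset.sum_ite_eq']
    rw [h1, hmarg]
    have h2 : ∑ i, ∑ j, v i j * (Matrix.vecMulVec ψ (star ψ)) j i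
        = (∑ i, (starRingEnd ℂ) (ψ i) * ψ i) * (∑ j, (starRingEnd ℂ) (ψ j) * ψ j) := by
      rw [Finset.sum_mul_sum]
      refine Finset.sum_congr rfl fun i _ => Finset.sum_congr rfl fun j _ => ?_
      simp only [hv, Matrix.vecMulVec_apply, Pi.star_apply, RCLike.star_def]
      ring
    rw [h2, hψC, one_mul]
  -- trace (P * ρ * P) = 0
  have htrP : (P * ρ * P).trace = 0 := by
    rw [Matrix.trace_mul_cycle, hPproj, hP, Matrix.sub_mul, one_mul,
      Matrix.trace_sub, htr, htrQρ, sub_self]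
  have hPρP : P * ρ * P = 0 := by
    refine psd_trace_zero ?_ htrP
    have := hpsd.mul_mul_conjTranspose_same P
    rwa [hPherm.eq] at this
  -- deduce ρ * P = 0 and P * ρ = 0
  obtain ⟨B, hB⟩ := (by open scoped MatrixOrder Matrix.Norms.L2Operator in exact CStarAlgebra.nonneg_iff_eq_star_mul_self.mp hpsd.nonneg : ∃ B : Matrix _ _ ℂ, ρ = Bᴴ * B)
  have hBP : B * P = 0 := by
    have h3 : (B * P)ᴴ * (B * P) = 0 := by
      rw [Matrix.conjTranspose_mul, hPherm.eq]
      calc P * Bᴴ * (B * P) = P * (Bᴴ * B) * P := by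
            simp only [Matrix.mul_assoc]
        _ = 0 := by rw [← hB]; exact hPρP
    exact Matrix.conjTranspose_mul_self_eq_zero.mp h3
  have hρP : ρ * P = 0 := by
    rw [hB, Matrix.mul_assoc, hBP, Matrix.mul_zero]
  have hPρ : P * ρ = 0 := by
    have := congrArg Matrix.conjTranspose hρP
    rwa [Matrix.conjTranspose_mul, hPherm.eq, hpsd.isHermitian.eq, Matrix.conjTranspose_zero]
      at this
  have hρQ : ρ * Q = ρ := by
    have : ρ * (1 - Q) = 0 := hρP
    rw [Matrix.mul_sub, Matrix.mul_one, sub_eq_zero] at this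
    exact this.symm
  have hQρ : Q * ρ = ρ := by
    have : (1 - Q) * ρ = 0 := hPρ
    rw [Matrix.sub_mul, Matrix.one_mul, sub_eq_zero] at this
    exact this.symm
  have hQρQ : ρ = Q * ρ * Q := by rw [hQρ, hρQ]
  -- entrywise identity
  set σ : Matrix (Fin n) (Fin n) ℂ :=
    Matrix.of fun k l => ∑ a, ∑ b, (starRingEnd ℂ) (ψ a) * ρ (a, k) (b, l) * ψ b with hσ
  have hQρ_app : ∀ (i : Fin m) (k : Fin n) (x : Fin m × Fin n),
      (Q * ρ) (i, k) x = ∑ a, ψ i * star (ψ a) * ρ (a, k) x := by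
    intro i k x
    simp only [Matrix.mul_apply, hQ, Matrix.kroneckerMap_apply, hv, Matrix.vecMulVec_apply,
      Pi.star_apply, Matrix.one_apply, Fintype.sum_prod_type, mul_ite, mul_one, mul_zero,
      ite_mul, zero_mul]
    exact Finset.sum_congr rfl fun a _ => by simp [Finset.sum_ite_eq', Finset.sum_ite_eq]
  have hfact : ρ = v ⊗ₖ σ := by
    rw [hQρQ]
    ext ⟨i, k⟩ ⟨j, l⟩
    have h4 : (Q * ρ * Q) (i, k) (j, l)
        = ∑ b, (Q * ρ) (i, k) (b, l) * (ψ b * star (ψ j)) := by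
      rw [Matrix.mul_apply (M := Q * ρ)]
      simp only [hQ, Matrix.kroneckerMap_apply, hv,
        Matrix.vecMulVec_apply, Pi.star_apply, Matrix.one_apply, Fintype.sum_prod_type,
        mul_ite, mul_one, mul_zero]
      exact Finset.sum_congr rfl fun b _ => by simp [Finset.sum_ite_eq', Finset.sum_ite_eq]
    rw [h4]
    simp only [Matrix.kroneckerMap_apply, hv, Matrix.vecMulVec_apply, Pi.star_apply, hσ,
      Matrix.of_apply]
    rw [Finset.mul_sum]
    calc ∑ b, (Q * ρ) (i, k) (b, l) * (ψ b * star (ψ j))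
        = ∑ b, ∑ a, ψ i * star (ψ a) * ρ (a, k) (b, l) * (ψ b * star (ψ j)) := by
          refine Finset.sum_congr rfl fun b _ => ?_
          rw [hQρ_app, Finset.sum_mul]
      _ = ∑ a, ψ i * star (ψ j) * ∑ b, (starRingEnd ℂ) (ψ a) * ρ (a, k) (b, l) * ψ b := by
          conv_lhs => rw [Finset.sum_comm]
          refine Finset.sum_congr rfl fun a _ => ?_
          rw [Finset.mul_sum]
          refine Finset.sum_congr rfl fun b _ => ?_
          simp only [RCLike.star_def]
          ring
  have hmargB : margB ρ = σ := by
    ext k l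
    have h5 : margB ρ k l = ∑ i, (v ⊗ₖ σ) (i, k) (i, l) := by
      simp only [margB, Matrix.of_apply]
      exact Finset.sum_congr rfl fun i _ => by rw [hfact]
    rw [h5]
    simp only [Matrix.kroneckerMap_apply, hv, Matrix.vecMulVec_apply, Pi.star_apply]
    rw [← Finset.sum_mul]
    have h6 : (∑ i, ψ i * star (ψ i)) = 1 := by
      rw [← hψC]
      exact Finset.sum_congr rfl fun i _ => by simp only [RCLike.star_def]; ring
    rw [h6, one_mul]
  rw [hmargB]
  exact hfact
end
end

section
/- Let α be an m-partite state, β an n-partite state, and k a positive integer with k ≤ m and k ≤ n. If α is not k-UDA or β is not k-UDA, then the (m+n)-partite state α ⊗ β is not k-UDA. -/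
noncomputable section
open scoped Matrix Kronecker ComplexOrder

/-- A (possibly multipartite) matrix acting on `⨂ᵢ ℂ^{d i}`, with systems indexed by `ι`. -/
abbrev MState {ι : Type*} (d : ι → ℕ) : Type _ :=
  Matrix ((i : ι) → Fin (d i)) ((i : ι) → Fin (d i)) ℂ

/-- `ρ` is a quantum state: positive semidefinite with trace one. -/
def IsState {ι : Type*} [Fintype ι] [DecidableEq ι] {d : ι → ℕ} (ρ : MState d) : Prop :=
  ρ.PosSemidef ∧ ρ.trace = 1

/-- The marginal of `M` on the systems in `S`, i.e. the partial trace of `M`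
over the systems outside `S`. -/
def marginal {ι : Type*} [Fintype ι] [DecidableEq ι] {d : ι → ℕ} (S : Finset ι)
    (M : MState d) : MState (fun i : {j : ι // j ∈ S} => d i.1) :=
  Matrix.of fun x y => ∑ z : (i : {j : ι // j ∉ S}) → Fin (d i.1),
    M (fun i => if h : i ∈ S then x ⟨i, h⟩ else z ⟨i, h⟩)
      (fun i => if h : i ∈ S then y ⟨i, h⟩ else z ⟨i, h⟩)

/-- Two states are `k`-compatible when their marginals agree on every subset of size `k`. -/
def kCompatible {ι : Type*} [Fintype ι] [DecidableEq ι] {d : ι → ℕ} (k : ℕ)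
    (ρ σ : MState d) : Prop :=
  ∀ S : Finset ι, S.card = k → marginal S ρ = marginal S σ

/-- `ρ` is uniquely determined among all states (UDA) by its `k`-partite marginals. -/
def kUDA {ι : Type*} [Fintype ι] [DecidableEq ι] {d : ι → ℕ} (k : ℕ) (ρ : MState d) : Prop :=
  ∀ σ : MState d, IsState σ → kCompatible k ρ σ → σ = ρ

/-- The tensor (Kronecker) product of two multipartite states, regarded as a state on
the disjoint union of the two collections of systems. -/
def prodState {ι κ : Type*} {a : ι → ℕ} {b : κ → ℕ}
    (α : MState a) (β : MState b) : MState (Sum.elim a b) :=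
  Matrix.of fun x y =>
    α (fun i => x (Sum.inl i)) (fun i => y (Sum.inl i)) *
    β (fun j => x (Sum.inr j)) (fun j => y (Sum.inr j))

/-! ### Auxiliary lemmas -/

/-- Splitting dependent functions on the complement of `S` when `S ⊆ T`. -/
def splitPiAux {ι : Type*} [DecidableEq ι] (d : ι → ℕ) {S T : Finset ι} (hST : S ⊆ T) :
    ((j : {j : ι // j ∉ S}) → Fin (d j.1)) ≃
      (((j : {j : ι // j ∈ T \ S}) → Fin (d j.1)) × ((j : {j : ι // j ∉ T}) → Fin (d j.1))) where
  toFun z := (fun i => z ⟨i.1, (Finset.mem_sdiff.1 i.2).2⟩,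
    fun i => z ⟨i.1, fun h => i.2 (hST h)⟩)
  invFun p j := if h : j.1 ∈ T then p.1 ⟨j.1, Finset.mem_sdiff.2 ⟨h, j.2⟩⟩ else p.2 ⟨j.1, h⟩
  left_inv z := by funext j; dsimp only; split <;> rfl
  right_inv p := by
    ext i
    · dsimp only; rw [dif_pos (Finset.mem_sdiff.1 i.2).1]
    · dsimp only; rw [dif_neg i.2]

lemma marginal_subset_apply {ι : Type*} [Fintype ι] [DecidableEq ι] {d : ι → ℕ}
    {S T : Finset ι} (hST : S ⊆ T) (M : MState d)
    (x y : (i : {j : ι // j ∈ S}) → Fin (d i.1)) :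
    marginal S M x y = ∑ t : (i : {j : ι // j ∈ T \ S}) → Fin (d i.1),
      marginal T M
        (fun i => if h : i.1 ∈ S then x ⟨i.1, h⟩ else t ⟨i.1, Finset.mem_sdiff.2 ⟨i.2, h⟩⟩)
        (fun i => if h : i.1 ∈ S then y ⟨i.1, h⟩ else t ⟨i.1, Finset.mem_sdiff.2 ⟨i.2, h⟩⟩) := by
  classical
  rw [show marginal S M x y = ∑ z : ((j : {j : ι // j ∉ S}) → Fin (d j.1)), _ from rfl]
  rw [← Equiv.sum_comp (splitPiAux d hST).symm, Fintype.sum_prod_type]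
  refine Finset.sum_congr rfl fun t _ => ?_
  rw [show (marginal T M _ _ : ℂ) = ∑ w : ((j : {j : ι // j ∉ T}) → Fin (d j.1)), _ from rfl]
  refine Finset.sum_congr rfl fun w _ => ?_
  congr 1 <;> · funext i
                by_cases hS : i ∈ S
                · rw [dif_pos hS, dif_pos (hST hS), dif_pos hS]
                · rw [dif_neg hS]
                  by_cases hT : i ∈ T
                  · rw [dif_pos hT, dif_neg hS]
                    show (if h : i ∈ T then _ else _) = _
                    rw [dif_pos hT]
                  · rw [dif_neg hT]
                    show (if h : i ∈ T then _ else _) = _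
                    rw [dif_neg hT]

lemma marginal_eq_of_subset {ι : Type*} [Fintype ι] [DecidableEq ι] {d : ι → ℕ}
    {S T : Finset ι} (hST : S ⊆ T) {ρ σ : MState d}
    (h : marginal T ρ = marginal T σ) : marginal S ρ = marginal S σ := by
  ext x y
  rw [show (marginal S ρ x y : ℂ) = marginal S ρ x y from rfl]
  rw [marginal_subset_apply hST ρ x y, marginal_subset_apply hST σ x y, h]

/-- If `ρ` and `σ` are `k`-compatible, their marginals agree on all sets of size at most `k`. -/
lemma marginal_eq_of_card_le {ι : Type*} [Fintype ι] [DecidableEq ι] {d : ι → ℕ}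
    {k : ℕ} {ρ σ : MState d} (h : kCompatible k ρ σ) (hk : k ≤ Fintype.card ι)
    {S : Finset ι} (hS : S.card ≤ k) : marginal S ρ = marginal S σ := by
  obtain ⟨T, hST, -, hT⟩ := Finset.exists_subsuperset_card_eq (Finset.subset_univ S) hS
    (by simpa using hk)
  exact marginal_eq_of_subset hST (h T hT)

section prodMarg
variable {ι κ : Type*} [Fintype ι] [DecidableEq ι] [Fintype κ] [DecidableEq κ]
  {a : ι → ℕ} {b : κ → ℕ}

def leftSet (S : Finset (ι ⊕ κ)) : Finset ι := S.preimage Sum.inl Sum.inl_injective.injOn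
def rightSet (S : Finset (ι ⊕ κ)) : Finset κ := S.preimage Sum.inr Sum.inr_injective.injOn

omit [Fintype ι] [DecidableEq ι] [Fintype κ] [DecidableEq κ] in
lemma mem_leftSet {S : Finset (ι ⊕ κ)} {i : ι} : i ∈ leftSet S ↔ Sum.inl i ∈ S :=
  Finset.mem_preimage
omit [Fintype ι] [DecidableEq ι] [Fintype κ] [DecidableEq κ] in
lemma mem_rightSet {S : Finset (ι ⊕ κ)} {i : κ} : i ∈ rightSet S ↔ Sum.inr i ∈ S :=
  Finset.mem_preimage

omit [Fintype ι] [DecidableEq ι] [Fintype κ] [DecidableEq κ] in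
lemma leftSet_card_le {S : Finset (ι ⊕ κ)} : (leftSet S).card ≤ S.card :=
  Finset.card_le_card_of_injOn Sum.inl (fun i hi => mem_leftSet.1 hi) Sum.inl_injective.injOn

omit [Fintype ι] [DecidableEq ι] [Fintype κ] [DecidableEq κ] in
lemma rightSet_card_le {S : Finset (ι ⊕ κ)} : (rightSet S).card ≤ S.card :=
  Finset.card_le_card_of_injOn Sum.inr (fun i hi => mem_rightSet.1 hi) Sum.inr_injective.injOn

/-- Splitting dependent functions on the complement of `S ⊆ ι ⊕ κ`. -/
def splitSumAux (a : ι → ℕ) (b : κ → ℕ) (S : Finset (ι ⊕ κ)) :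
    ((j : {j : ι ⊕ κ // j ∉ S}) → Fin (Sum.elim a b j.1)) ≃
      (((i : {i : ι // i ∉ leftSet S}) → Fin (a i.1)) ×
        ((i : {i : κ // i ∉ rightSet S}) → Fin (b i.1))) where
  toFun z := (fun i => z ⟨Sum.inl i.1, fun h => i.2 (mem_leftSet.2 h)⟩,
    fun i => z ⟨Sum.inr i.1, fun h => i.2 (mem_rightSet.2 h)⟩)
  invFun p j := Sum.rec (motive := fun s => s ∉ S → Fin (Sum.elim a b s))
    (fun i h => p.1 ⟨i, fun h' => h (mem_leftSet.1 h')⟩)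
    (fun i h => p.2 ⟨i, fun h' => h (mem_rightSet.1 h')⟩) j.1 j.2
  left_inv z := by funext j; rcases j with ⟨i | i, h⟩ <;> rfl
  right_inv p := by ext i <;> rfl

lemma marginal_prod_apply (α : MState a) (β : MState b) (S : Finset (ι ⊕ κ))
    (x y : (i : {j : ι ⊕ κ // j ∈ S}) → Fin (Sum.elim a b i.1)) :
    marginal S (prodState α β) x y =
      marginal (leftSet S) α
          (fun i => x ⟨Sum.inl i.1, mem_leftSet.1 i.2⟩)
          (fun i => y ⟨Sum.inl i.1, mem_leftSet.1 i.2⟩) *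
        marginal (rightSet S) β
          (fun i => x ⟨Sum.inr i.1, mem_rightSet.1 i.2⟩)
          (fun i => y ⟨Sum.inr i.1, mem_rightSet.1 i.2⟩) := by
  classical
  rw [show marginal S (prodState α β) x y
    = ∑ z : ((j : {j : ι ⊕ κ // j ∉ S}) → Fin (Sum.elim a b j.1)), _ from rfl]
  rw [← Equiv.sum_comp (splitSumAux a b S).symm, Fintype.sum_prod_type]
  show _ = (∑ z₁ : ((i : {i : ι // i ∉ leftSet S}) → Fin (a i.1)), _) *
    (∑ z₂ : ((i : {i : κ // i ∉ rightSet S}) → Fin (b i.1)), _)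
  rw [Finset.sum_mul_sum]
  refine Finset.sum_congr rfl fun z₁ _ => Finset.sum_congr rfl fun z₂ _ => ?_
  show prodState α β _ _ = _
  rw [prodState]
  simp only [Matrix.of_apply]
  congr 1
  · congr 1 <;> · funext i
                  by_cases h : Sum.inl i ∈ S
                  · rw [dif_pos h]; symm; exact dif_pos (mem_leftSet.2 h)
                  · rw [dif_neg h]
                    symm; exact dif_neg (fun h' => h (mem_leftSet.1 h'))
  · congr 1 <;> · funext i
                  by_cases h : Sum.inr i ∈ S
                  · rw [dif_pos h]; symm; exact dif_pos (mem_rightSet.2 h)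
                  · rw [dif_neg h]
                    symm; exact dif_neg (fun h' => h (mem_rightSet.1 h'))

/-- `prodState` is a submatrix (along an equivalence) of the Kronecker product. -/
lemma prodState_eq_submatrix (α : MState a) (β : MState b) :
    prodState α β = (Matrix.kroneckerMap (· * ·) α β).submatrix
      (fun x => (Equiv.sumPiEquivProdPi fun s => Fin (Sum.elim a b s)) x)
      (fun x => (Equiv.sumPiEquivProdPi fun s => Fin (Sum.elim a b s)) x) := rfl

lemma prodState_posSemidef {α : MState a} {β : MState b}
    (hα : α.PosSemidef) (hβ : β.PosSemidef) : (prodState α β).PosSemidef := by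
  rw [prodState_eq_submatrix]
  refine Matrix.PosSemidef.submatrix ?_ _
  obtain ⟨A, rfl⟩ : ∃ A : MState a, α = Aᴴ * A := by
    classical
    open scoped MatrixOrder in exact CStarAlgebra.nonneg_iff_eq_star_mul_self.mp hα.nonneg
  obtain ⟨B, rfl⟩ : ∃ B : MState b, β = Bᴴ * B := by
    classical
    open scoped MatrixOrder in exact CStarAlgebra.nonneg_iff_eq_star_mul_self.mp hβ.nonneg
  rw [Matrix.mul_kronecker_mul]
  have : (Matrix.kroneckerMap (· * ·) Aᴴ Bᴴ) = (Matrix.kroneckerMap (· * ·) A B)ᴴ := by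
    ext ⟨i, j⟩ ⟨p, q⟩
    simp [Matrix.conjTranspose_apply, Matrix.kroneckerMap_apply, mul_comm]
  rw [this]
  exact Matrix.posSemidef_conjTranspose_mul_self _

lemma prodState_trace (α : MState a) (β : MState b) :
    (prodState α β).trace = α.trace * β.trace := by
  have : (prodState α β).trace = (Matrix.kroneckerMap (· * ·) α β).trace := by
    rw [prodState_eq_submatrix]
    simp only [Matrix.trace, Matrix.diag, Matrix.submatrix_apply]
    exact Equiv.sum_comp (Equiv.sumPiEquivProdPi fun s => Fin (Sum.elim a b s))
      (fun p => Matrix.kroneckerMap (· * ·) α β p p)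
  rw [this, Matrix.trace_kronecker]

lemma prodState_ne_left {α α' : MState a} {β : MState b}
    (hβ : β.trace = 1) (hne : α ≠ α') : prodState α β ≠ prodState α' β := by
  obtain ⟨x, y, hxy⟩ : ∃ x y, α x y ≠ α' x y := by
    by_contra hc
    push_neg at hc
    exact hne (by ext x y; exact hc x y)
  have : ∃ j, β j j ≠ 0 := by
    have : β.trace ≠ 0 := by rw [hβ]; exact one_ne_zero
    obtain ⟨j, -, hj⟩ := Finset.exists_ne_zero_of_sum_ne_zero this
    exact ⟨j, hj⟩
  obtain ⟨j, hj⟩ := this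
  intro hc
  apply hxy
  have := congrFun (congrFun hc
    (fun s => Sum.rec (motive := fun s => Fin (Sum.elim a b s)) x j s))
    (fun s => Sum.rec (motive := fun s => Fin (Sum.elim a b s)) y j s)
  simp only [prodState, Matrix.of_apply] at this
  exact mul_right_cancel₀ hj this

lemma prodState_ne_right {α : MState a} {β β' : MState b}
    (hα : α.trace = 1) (hne : β ≠ β') : prodState α β ≠ prodState α β' := by
  obtain ⟨x, y, hxy⟩ : ∃ x y, β x y ≠ β' x y := by
    by_contra hc
    push_neg at hc
    exact hne (by ext x y; exact hc x y)
  have : ∃ j, α j j ≠ 0 := by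
    have : α.trace ≠ 0 := by rw [hα]; exact one_ne_zero
    obtain ⟨j, -, hj⟩ := Finset.exists_ne_zero_of_sum_ne_zero this
    exact ⟨j, hj⟩
  obtain ⟨j, hj⟩ := this
  intro hc
  apply hxy
  have := congrFun (congrFun hc
    (fun s => Sum.rec (motive := fun s => Fin (Sum.elim a b s)) j x s))
    (fun s => Sum.rec (motive := fun s => Fin (Sum.elim a b s)) j y s)
  simp only [prodState, Matrix.of_apply] at this
  exact mul_left_cancel₀ hj this

end prodMarg

/-- If one of the states `α`, `β` is not `k`-UDA, then neither is `α ⊗ β`. -/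
theorem not_kUDA_prod_of_not_kUDA {m n k : ℕ} (hk : 1 ≤ k) (hkm : k ≤ m) (hkn : k ≤ n)
    (a : Fin m → ℕ) (b : Fin n → ℕ) (α : MState a) (β : MState b)
    (hα : IsState α) (hβ : IsState β)
    (h : ¬ kUDA k α ∨ ¬ kUDA k β) :
    ¬ kUDA k (prodState α β) := by
  intro hUDA
  rcases h with hα' | hβ'
  · apply hα'
    intro σ hσ hcomp
    by_contra hne
    have hstate : IsState (prodState σ β) :=
      ⟨prodState_posSemidef hσ.1 hβ.1, by rw [prodState_trace, hσ.2, hβ.2, one_mul]⟩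
    have hcomp' : kCompatible k (prodState α β) (prodState σ β) := by
      intro S hS
      have h₁ : marginal (leftSet S) α = marginal (leftSet S) σ :=
        marginal_eq_of_card_le hcomp (by simpa using hkm) (hS ▸ leftSet_card_le)
      ext x y
      rw [show (marginal S (prodState α β) x y : ℂ) = _ from rfl]
      rw [marginal_prod_apply α β S x y, marginal_prod_apply σ β S x y, h₁]
    have := hUDA (prodState σ β) hstate hcomp'
    exact prodState_ne_left hβ.2 hne this
  · apply hβ'
    intro σ hσ hcomp
    by_contra hne
    have hstate : IsState (prodState α σ) :=
      ⟨prodState_posSemidef hα.1 hσ.1, by rw [prodState_trace, hα.2, hσ.2, one_mul]⟩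
    have hcomp' : kCompatible k (prodState α β) (prodState α σ) := by
      intro S hS
      have h₂ : marginal (rightSet S) β = marginal (rightSet S) σ :=
        marginal_eq_of_card_le hcomp (by simpa using hkn) (hS ▸ rightSet_card_le)
      ext x y
      rw [show (marginal S (prodState α β) x y : ℂ) = _ from rfl]
      rw [marginal_prod_apply α β S x y, marginal_prod_apply α σ S x y, h₂]
    have := hUDA (prodState α σ) hstate hcomp'
    exact prodState_ne_right hα.2 hne this
end
end

section
/- Let ρ and τ be n-partite states with the same local dimensions, and let 1 ≤ k ≤ n. If τ is not k-UDA and the range of τ is contained in the range of ρ, then ρ is not k-UDA. In particular, two n-partite states with the same range are simultaneously k-UDA or simultaneously not k-UDA. -/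
noncomputable section
open scoped Matrix Kronecker ComplexOrder

section Aux
variable {m : Type*} [Fintype m] [DecidableEq m]

lemma my_mulVecLin_inj {A B : Matrix m m ℂ} (h : A.mulVecLin = B.mulVecLin) : A = B :=
  Matrix.toLin'.injective (by rw [Matrix.toLin'_apply', Matrix.toLin'_apply', h])

lemma my_exists_factor {A B : Matrix m m ℂ}
    (h : LinearMap.range A.mulVecLin ≤ LinearMap.range B.mulVecLin) :
    ∃ C : Matrix m m ℂ, A = B * C := by
  set f := A.mulVecLin with hf
  set g := B.mulVecLin with hg
  obtain ⟨s, hs⟩ := g.rangeRestrict.exists_rightInverse_of_surjective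
    (LinearMap.range_eq_top.mpr (LinearMap.surjective_rangeRestrict g))
  have key : ∀ y : LinearMap.range g, g (s y) = y := fun y =>
    congrArg Subtype.val (LinearMap.congr_fun hs y)
  let h' : (m → ℂ) →ₗ[ℂ] (m → ℂ) :=
    s.comp (f.codRestrict (LinearMap.range g) fun x => h ⟨x, rfl⟩)
  refine ⟨LinearMap.toMatrix' h', my_mulVecLin_inj ?_⟩
  rw [Matrix.mulVecLin_mul]
  have hC : (LinearMap.toMatrix' h').mulVecLin = h' := by
    rw [← Matrix.toLin'_apply', Matrix.toLin'_toMatrix']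
  rw [hC, ← hg, ← hf]
  refine LinearMap.ext fun x => ?_
  exact (key ⟨f x, h ⟨x, rfl⟩⟩).symm

lemma my_posSemidef_real_smul {A : Matrix m m ℂ} (hA : A.PosSemidef) {ε : ℝ} (hε : 0 ≤ ε) :
    ((ε : ℂ) • A).PosSemidef := by
  refine Matrix.PosSemidef.of_dotProduct_mulVec_nonneg ?_ ?_
  · unfold Matrix.IsHermitian
    rw [Matrix.conjTranspose_smul, hA.1.eq]
    norm_num
  · intro x
    rw [Matrix.smul_mulVec, dotProduct_smul, smul_eq_mul]
    exact mul_nonneg (by exact_mod_cast hε) (hA.dotProduct_mulVec_nonneg x)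

lemma my_bound {C : Matrix m m ℂ} (hC : C.PosSemidef) :
    ∃ M : ℝ, 0 ≤ M ∧ ((M : ℂ) • 1 - C).PosSemidef := by
  set M : ℝ := ∑ i, hC.1.eigenvalues i with hM
  refine ⟨M, Finset.sum_nonneg fun i _ => hC.eigenvalues_nonneg i, ?_⟩
  set U : Matrix m m ℂ := (hC.1.eigenvectorUnitary : Matrix m m ℂ) with hU
  have hUU : U * star U = 1 := Matrix.mem_unitaryGroup_iff.mp hC.1.eigenvectorUnitary.2
  have hD : ((M : ℂ) • 1 - C) = U * Matrix.diagonal (fun i => ((M - hC.1.eigenvalues i : ℝ) : ℂ)) * star U := by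
    have hsp := hC.1.spectral_theorem
    rw [Unitary.conjStarAlgAut_apply] at hsp
    have hsplit : (Matrix.diagonal fun i => ((M - hC.1.eigenvalues i : ℝ) : ℂ))
        = (M : ℂ) • 1 - Matrix.diagonal (RCLike.ofReal ∘ hC.1.eigenvalues) := by
      ext i j
      by_cases hij : i = j
      · subst hij
        simp [Matrix.diagonal_apply_eq, Matrix.one_apply_eq, Function.comp]
      · simp [Matrix.diagonal_apply_ne _ hij, Matrix.one_apply_ne hij]
    rw [hsplit, Matrix.mul_sub, Matrix.sub_mul,
      mul_smul_comm, smul_mul_assoc, mul_one, hUU, ← hsp]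
  rw [hD]
  rw [Matrix.star_eq_conjTranspose]
  apply Matrix.PosSemidef.mul_mul_conjTranspose_same
  refine Matrix.posSemidef_diagonal_iff.mpr fun i => ?_
  have : (0:ℝ) ≤ M - hC.1.eigenvalues i :=
    sub_nonneg.mpr (Finset.single_le_sum (fun j _ => hC.eigenvalues_nonneg j) (Finset.mem_univ i))
  exact_mod_cast this

end Aux

open scoped MatrixOrder in
lemma my_exists_pos_smul {m : Type*} [Fintype m] [DecidableEq m]
    {ρ τ : Matrix m m ℂ} (hρ : ρ.PosSemidef) (hτ : τ.PosSemidef)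
    (h : LinearMap.range τ.mulVecLin ≤ LinearMap.range ρ.mulVecLin) :
    ∃ ε : ℝ, 0 < ε ∧ (ρ - (ε : ℂ) • τ).PosSemidef := by
  set sρ := CFC.sqrt ρ with hsρdef
  set sτ := CFC.sqrt τ with hsτdef
  have hsρ : sρ * sρ = ρ := CFC.sqrt_mul_sqrt_self ρ hρ.nonneg
  have hsτ : sτ * sτ = τ := CFC.sqrt_mul_sqrt_self τ hτ.nonneg
  have hsρH : sρᴴ = sρ := (Matrix.nonneg_iff_posSemidef.mp (CFC.sqrt_nonneg ρ)).1
  have hsτH : sτᴴ = sτ := (Matrix.nonneg_iff_posSemidef.mp (CFC.sqrt_nonneg τ)).1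
  have h1 : LinearMap.range τ.mulVecLin ≤ LinearMap.range sτ.mulVecLin := by
    rw [← hsτ, Matrix.mulVecLin_mul]; exact LinearMap.range_comp_le_range _ _
  have e1 := Matrix.rank_conjTranspose_mul_self sτ
  rw [hsτH, hsτ] at e1
  have h2 : LinearMap.range sτ.mulVecLin = LinearMap.range τ.mulVecLin :=
    (Submodule.eq_of_le_of_finrank_le h1 e1.ge).symm
  have h3 : LinearMap.range ρ.mulVecLin ≤ LinearMap.range sρ.mulVecLin := by
    rw [← hsρ, Matrix.mulVecLin_mul]; exact LinearMap.range_comp_le_range _ _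
  obtain ⟨B, hB⟩ := my_exists_factor (h2.le.trans (h.trans h3))
  set C := B * Bᴴ with hCdef
  have hCps : C.PosSemidef := Matrix.posSemidef_self_mul_conjTranspose B
  have hτeq : τ = sρ * C * sρ := by
    calc τ = sτ * sτᴴ := by rw [hsτH, hsτ]
    _ = (sρ * B) * (sρ * B)ᴴ := by rw [← hB]
    _ = sρ * C * sρ := by
        rw [Matrix.conjTranspose_mul, hsρH, hCdef]
        simp only [Matrix.mul_assoc]
  obtain ⟨M, hM0, hM⟩ := my_bound hCps
  refine ⟨(1 + M)⁻¹, by positivity, ?_⟩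
  set εc : ℂ := (((1 + M)⁻¹ : ℝ) : ℂ) with hεc
  have hXps : (εc • (((M : ℂ) • 1 - C) + 1)).PosSemidef :=
    my_posSemidef_real_smul (hM.add Matrix.PosSemidef.one) (by positivity)
  have hfinal := hXps.mul_mul_conjTranspose_same sρ
  rw [hsρH] at hfinal
  have hsc : εc * (M : ℂ) + εc = 1 := by
    rw [hεc]
    push_cast
    field_simp
    ring
  have key : sρ * (εc • (((M : ℂ) • 1 - C) + 1)) * sρ = ρ - εc • τ := by
    have expand : sρ * (εc • (((M : ℂ) • 1 - C) + 1)) * sρ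
        = εc • ((M : ℂ) • (sρ * sρ) - sρ * C * sρ + sρ * sρ) := by
      simp only [mul_smul_comm, smul_mul_assoc, Matrix.mul_sub, Matrix.sub_mul,
        Matrix.mul_add, Matrix.add_mul, Matrix.mul_one, Matrix.one_mul]
    rw [expand, hsρ, ← hτeq]
    calc εc • ((M : ℂ) • ρ - τ + ρ) = (εc * (M : ℂ) + εc) • ρ - εc • τ := by module
    _ = ρ - εc • τ := by rw [hsc, one_smul]
  rw [← key]
  exact hfinal

lemma marginal_add {ι : Type*} [Fintype ι] [DecidableEq ι] {d : ι → ℕ} (S : Finset ι)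
    (A B : MState d) : marginal S (A + B) = marginal S A + marginal S B := by
  ext x y
  simp [marginal, Finset.sum_add_distrib]

lemma marginal_sub {ι : Type*} [Fintype ι] [DecidableEq ι] {d : ι → ℕ} (S : Finset ι)
    (A B : MState d) : marginal S (A - B) = marginal S A - marginal S B := by
  ext x y
  simp [marginal, Finset.sum_sub_distrib]

lemma marginal_smul {ι : Type*} [Fintype ι] [DecidableEq ι] {d : ι → ℕ} (c : ℂ) (S : Finset ι)
    (A : MState d) : marginal S (c • A) = c • marginal S A := by
  ext x y
  simp [marginal, Finset.mul_sum]


/-- (i) If `τ` is not `k`-UDA and the range of `τ` is contained in the range of `ρ`, then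
`ρ` is not `k`-UDA.  (ii) In particular, two states with the same range are simultaneously
`k`-UDA or simultaneously not `k`-UDA. -/
theorem not_kUDA_of_range_le_and_same_range_iff {n k : ℕ} (hk1 : 1 ≤ k) (hkn : k ≤ n)
    (d : Fin n → ℕ) :
    (∀ ρ τ : MState d, IsState ρ → IsState τ → ¬ kUDA k τ →
      LinearMap.range τ.mulVecLin ≤ LinearMap.range ρ.mulVecLin → ¬ kUDA k ρ) ∧
    (∀ ρ τ : MState d, IsState ρ → IsState τ →
      LinearMap.range τ.mulVecLin = LinearMap.range ρ.mulVecLin →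
      (kUDA k ρ ↔ kUDA k τ)) := by
  have main : ∀ ρ τ : MState d, IsState ρ → IsState τ → ¬ kUDA k τ →
      LinearMap.range τ.mulVecLin ≤ LinearMap.range ρ.mulVecLin → ¬ kUDA k ρ := by
    intro ρ τ hρ hτ hτn hle hUDA
    rw [kUDA] at hτn
    push_neg at hτn
    obtain ⟨σ, hσ, hcomp, hne⟩ := hτn
    obtain ⟨ε, hε, hPSD⟩ := my_exists_pos_smul hρ.1 hτ.1 hle
    set ρ' : MState d := (ρ - (ε : ℂ) • τ) + (ε : ℂ) • σ with hρ'def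
    have hstate : IsState ρ' := by
      constructor
      · exact hPSD.add (my_posSemidef_real_smul hσ.1 hε.le)
      · simp [hρ'def, Matrix.trace_add, Matrix.trace_sub, Matrix.trace_smul, hρ.2, hτ.2, hσ.2]
    have hcompat : kCompatible k ρ ρ' := by
      intro S hS
      rw [hρ'def, marginal_add, marginal_sub, marginal_smul, marginal_smul, hcomp S hS]
      abel
    have h0 := hUDA ρ' hstate hcompat
    rw [hρ'def] at h0
    apply hne
    have h2' : (ε : ℂ) • σ - (ε : ℂ) • τ = (ρ - (ε : ℂ) • τ + (ε : ℂ) • σ) - ρ := by abel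
    rw [h0, sub_self] at h2'
    exact smul_right_injective (MState d) (by exact_mod_cast hε.ne') (sub_eq_zero.mp h2')
  refine ⟨main, fun ρ τ hρ hτ heq => ⟨fun h => ?_, fun h => ?_⟩⟩
  · by_contra hτn
    exact main ρ τ hρ hτ hτn heq.le h
  · by_contra hρn
    exact main τ ρ hτ hρ hρn heq.ge h
end
end

section
/- Let ρ be an n-partite state and let 1 ≤ k < n. If ρ is not equal to its entrywise complex conjugate ρ̄ (i.e. ρ has a nonzero entrywise imaginary part), but every k-partite marginal of ρ is a real matrix, then ρ is not k-UDA. -/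
noncomputable section
open scoped Matrix Kronecker ComplexOrder

/-- If a state `ρ` is not real (it differs from its entrywise complex conjugate) but all of
its `k`-partite marginals are real matrices, then `ρ` is not `k`-UDA. -/
theorem not_kUDA_of_real_marginals {n k : ℕ} (hk1 : 1 ≤ k) (hkn : k < n)
    (d : Fin n → ℕ) (ρ : MState d) (hρ : IsState ρ)
    (hnotreal : ρ ≠ ρ.map (starRingEnd ℂ))
    (hrealmarg : ∀ S : Finset (Fin n), S.card = k → ∀ x y, (marginal S ρ x y).im = 0) :
    ¬ kUDA k ρ := by
  intro hUDA
  set σ : MState d := ρ.map (starRingEnd ℂ) with hσ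
  have hmapT : σ = ρ.transpose := by
    have : ρ.conjTranspose = ρ := hρ.1.1
    calc σ = ρ.conjTranspose.transpose := by
            ext x y; simp [hσ, Matrix.conjTranspose_apply, Matrix.transpose_apply]
      _ = ρ.transpose := by rw [this]
  have hσstate : IsState σ := by
    constructor
    · rw [hmapT]; exact hρ.1.transpose
    · rw [hmapT, Matrix.trace_transpose]; exact hρ.2
  have hcompat : kCompatible k ρ σ := by
    intro S hS
    ext x y
    have him := hrealmarg S hS x y
    have : marginal S σ x y = (starRingEnd ℂ) (marginal S ρ x y) := by
      simp only [marginal, Matrix.of_apply, map_sum, hσ, Matrix.map_apply]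
    rw [this, Complex.conj_eq_iff_im.mpr him]
  exact hnotreal (hUDA σ hσstate hcompat).symm
end
end

section
/- Let ρ be a positive semidefinite matrix indexed by tuples over n systems and H a Hermitian matrix of the same size, and suppose the range of H is contained in the range of ρ. Then for every subset S of the systems, the range of the marginal H_S is contained in the range of the marginal ρ_S. -/
noncomputable section
open scoped Matrix Kronecker ComplexOrder

section Aux

variable {ι : Type*} [Fintype ι] [DecidableEq ι] {d : ι → ℕ}

/-- Splitting a multi-index into the `S` part and the complement part. -/
def margE (S : Finset ι) : ((i : ι) → Fin (d i)) ≃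
    (((i : {j : ι // j ∈ S}) → Fin (d i.1)) × ((i : {j : ι // j ∉ S}) → Fin (d i.1))) :=
  Equiv.piEquivPiSubtypeProd (fun i => i ∈ S) (fun i => Fin (d i))

/-- The embedding `v ⊗ e_z` of a vector on the `S` systems into the full space. -/
def wv (S : Finset ι) (v : ((i : {j : ι // j ∈ S}) → Fin (d i.1)) → ℂ)
    (z : (i : {j : ι // j ∉ S}) → Fin (d i.1)) : ((i : ι) → Fin (d i)) → ℂ :=
  fun a => if ((margE S) a).2 = z then v ((margE S) a).1 else 0

lemma mulVec_wv (S : Finset ι) (M : MState d) (v) (z) (a) :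
    (M *ᵥ wv S v z) a = ∑ y, M a ((margE S).symm (y, z)) * v y := by
  show ∑ b, M a b * wv S v z b = _
  rw [← Equiv.sum_comp (margE S).symm (fun b => M a b * wv S v z b)]
  rw [Fintype.sum_prod_type]
  refine Finset.sum_congr rfl fun y _ => ?_
  simp [wv, Equiv.apply_symm_apply, mul_ite, mul_zero, Finset.sum_ite_eq']

lemma marg_mulVec (S : Finset ι) (M : MState d) (v) (x) :
    ((marginal S M) *ᵥ v) x = ∑ z, (M *ᵥ wv S v z) ((margE S).symm (x, z)) := by
  simp only [mulVec_wv]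
  show ∑ y, marginal S M x y * v y = _
  rw [Finset.sum_comm]
  refine Finset.sum_congr rfl fun y _ => ?_
  show (∑ z, M ((margE S).symm (x, z)) ((margE S).symm (y, z))) * v y = _
  rw [Finset.sum_mul]

lemma quad (S : Finset ι) (M : MState d) (v) :
    star v ⬝ᵥ ((marginal S M) *ᵥ v) = ∑ z, star (wv S v z) ⬝ᵥ (M *ᵥ wv S v z) := by
  have hrhs : ∀ z, star (wv S v z) ⬝ᵥ (M *ᵥ wv S v z)
      = ∑ x, star (v x) * (M *ᵥ wv S v z) ((margE S).symm (x, z)) := by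
    intro z
    show ∑ a, star (wv S v z a) * (M *ᵥ wv S v z) a = _
    rw [← Equiv.sum_comp (margE S).symm
      (fun a => star (wv S v z a) * (M *ᵥ wv S v z) a)]
    rw [Fintype.sum_prod_type]
    refine Finset.sum_congr rfl fun x _ => ?_
    simp [wv, Equiv.apply_symm_apply, apply_ite (starRingEnd ℂ), ite_mul, zero_mul,
      Finset.sum_ite_eq']
  simp only [hrhs]
  rw [Finset.sum_comm]
  refine Finset.sum_congr rfl fun x _ => ?_
  show star (v x) * ((marginal S M) *ᵥ v) x = _
  rw [marg_mulVec, Finset.mul_sum]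

lemma marg_herm (S : Finset ι) (M : MState d) (hM : M.IsHermitian) :
    (marginal S M).IsHermitian := by
  ext x y
  simp only [Matrix.conjTranspose_apply, marginal, Matrix.of_apply, star_sum]
  refine Finset.sum_congr rfl fun z _ => ?_
  exact congrFun (congrFun hM _) _

end Aux

/-- factorization through a map with smaller kernel -/
lemma exists_comp_of_ker_le {K V W U : Type*} [Field K] [AddCommGroup V] [Module K V]
    [AddCommGroup W] [Module K W] [AddCommGroup U] [Module K U]
    (f : V →ₗ[K] W) (g : V →ₗ[K] U) (h : LinearMap.ker f ≤ LinearMap.ker g) :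
    ∃ C : W →ₗ[K] U, g = C ∘ₗ f := by
  obtain ⟨C, hC⟩ := LinearMap.exists_extend
    ((Submodule.liftQ (LinearMap.ker f) g h) ∘ₗ (f.quotKerEquivRange).symm.toLinearMap)
  refine ⟨C, ?_⟩
  ext v
  have h1 : C ((LinearMap.range f).subtype ⟨f v, LinearMap.mem_range_self f v⟩)
      = (Submodule.liftQ (LinearMap.ker f) g h)
        ((f.quotKerEquivRange).symm ⟨f v, LinearMap.mem_range_self f v⟩) := by
    rw [← LinearMap.comp_apply, hC]; rfl
  simp only [Submodule.coe_subtype] at h1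
  rw [LinearMap.comp_apply, h1, LinearMap.quotKerEquivRange_symm_apply_image,
    Submodule.mkQ_apply, Submodule.liftQ_apply]

lemma range_mulVecLin_le_of_ker {m : Type*} [Fintype m] [DecidableEq m]
    {A B : Matrix m m ℂ} (hA : A.IsHermitian) (hB : B.IsHermitian)
    (h : ∀ v, A *ᵥ v = 0 → B *ᵥ v = 0) :
    LinearMap.range B.mulVecLin ≤ LinearMap.range A.mulVecLin := by
  have hk : LinearMap.ker A.mulVecLin ≤ LinearMap.ker B.mulVecLin := by
    intro v hv
    simp only [LinearMap.mem_ker, Matrix.mulVecLin_apply] at hv ⊢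
    exact h v hv
  obtain ⟨C, hC⟩ := exists_comp_of_ker_le A.mulVecLin B.mulVecLin hk
  have hBC : B = (LinearMap.toMatrix' C) * A := by
    have := congrArg LinearMap.toMatrix' hC
    rwa [← Matrix.toLin'_apply' B, LinearMap.toMatrix'_toLin',
      ← Matrix.toLin'_apply' A, LinearMap.toMatrix'_comp, LinearMap.toMatrix'_toLin'] at this
  have hBA : B = A * (LinearMap.toMatrix' C)ᴴ := by
    calc B = Bᴴ := hB.symm
    _ = ((LinearMap.toMatrix' C) * A)ᴴ := by rw [← hBC]
    _ = Aᴴ * (LinearMap.toMatrix' C)ᴴ := Matrix.conjTranspose_mul _ _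
    _ = A * (LinearMap.toMatrix' C)ᴴ := by rw [hA]
  rintro x ⟨v, rfl⟩
  refine ⟨(LinearMap.toMatrix' C)ᴴ *ᵥ v, ?_⟩
  simp only [Matrix.mulVecLin_apply]
  rw [Matrix.mulVec_mulVec, ← hBA]

lemma ker_le_of_range_le {m : Type*} [Fintype m] [DecidableEq m]
    {A B : Matrix m m ℂ} (hA : A.IsHermitian) (hB : B.IsHermitian)
    (hR : LinearMap.range B.mulVecLin ≤ LinearMap.range A.mulVecLin)
    (v : m → ℂ) (hv : A *ᵥ v = 0) : B *ᵥ v = 0 := by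
  have hmem : B *ᵥ (B *ᵥ v) ∈ LinearMap.range A.mulVecLin := hR ⟨B *ᵥ v, rfl⟩
  obtain ⟨u, hu⟩ := hmem
  simp only [Matrix.mulVecLin_apply] at hu
  have hva : star v ᵥ* A = 0 := by
    have := congrArg star hv
    rwa [Matrix.star_mulVec, hA, star_zero] at this
  have key : star (B *ᵥ v) ⬝ᵥ (B *ᵥ v) = 0 := by
    calc star (B *ᵥ v) ⬝ᵥ (B *ᵥ v) = (star v ᵥ* B) ⬝ᵥ (B *ᵥ v) := by
          rw [Matrix.star_mulVec, hB]
    _ = star v ⬝ᵥ (B *ᵥ (B *ᵥ v)) := (Matrix.dotProduct_mulVec _ _ _).symm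
    _ = star v ⬝ᵥ (A *ᵥ u) := by rw [hu]
    _ = (star v ᵥ* A) ⬝ᵥ u := Matrix.dotProduct_mulVec _ _ _
    _ = 0 := by rw [hva, zero_dotProduct]
  exact dotProduct_star_self_eq_zero.mp key


/-- If `ρ` is positive semidefinite, `H` is Hermitian of the same (multipartite) size, and
the range of `H` is contained in the range of `ρ`, then for every subset `S` of the systems
the range of the marginal `H_S` is contained in the range of the marginal `ρ_S`. -/
theorem range_marginal_le_of_range_le {n : ℕ} (d : Fin n → ℕ) (ρ H : MState d)
    (hρ : ρ.PosSemidef) (hH : H.IsHermitian)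
    (hR : LinearMap.range H.mulVecLin ≤ LinearMap.range ρ.mulVecLin)
    (S : Finset (Fin n)) :
    LinearMap.range (marginal S H).mulVecLin ≤
      LinearMap.range (marginal S ρ).mulVecLin := by
  apply range_mulVecLin_le_of_ker (marg_herm S ρ hρ.1) (marg_herm S H hH)
  intro v hv
  have h0 : star v ⬝ᵥ ((marginal S ρ) *ᵥ v) = 0 := by rw [hv, dotProduct_zero]
  rw [quad] at h0
  have hz := (Finset.sum_eq_zero_iff_of_nonneg (fun z _ => hρ.dotProduct_mulVec_nonneg (wv S v z))).mp h0
  have hHz : ∀ z, H *ᵥ wv S v z = 0 := fun z =>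
    ker_le_of_range_le hρ.1 hH hR _
      ((hρ.dotProduct_mulVec_zero_iff _).mp (hz z (Finset.mem_univ z)))
  funext x
  rw [marg_mulVec]
  simp [hHz]
end
end

section
/- Let η be a bipartite state on ℂ^m ⊗ ℂ^n with rank r satisfying 1 ≤ r ≤ m + n − 2. Then there exist unitary matrices U ∈ U(m) and V ∈ U(n) such that the state (U ⊗ V) η (U ⊗ V)† has its last diagonal entry equal to zero, i.e. the entry at row and column index (m−1, n−1) vanishes (equivalently, since the matrix is positive semidefinite, its entire last row and last column vanish, so it has the block form M ⊕ 0). -/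
/-!
A product vector `u ⊗ v` in the kernel of `η` is all that is needed: unitaries whose last rows
are multiples of `ū` and `v̄` then annihilate the last diagonal entry. Such a vector is a common
zero, with `u ≠ 0` and `v ≠ 0`, of the bilinear forms `λᵢ(x, y) = ∑ wᵢ(j, k) x_j y_k` given by a
basis `w₁, …, w_r` of the row space of `η`.

If there were no such zero, every `x_j y_k` would vanish on the zero locus of the `λᵢ`, so by the
Nullstellensatz `(x_j y_k) ^ N ∈ (λ₁, …, λ_r)` for some `N`. In bidegree `(d, d)` with `d` large
every monomial is divisible by some `(x_j y_k) ^ N`, so the polynomials of bidegree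
`(D + k, D + k)` are spanned by the products of the degree-`k` monomials in the `λᵢ` with a fixed
finite set: their dimension grows at most like `k ^ (r - 1)`. But it grows like `k ^ (m + n - 2)`,
and `r ≤ m + n - 2`.
-/

noncomputable section
open scoped Matrix Kronecker ComplexOrder

open MvPolynomial Finset
open scoped Pointwise

attribute [local instance] MvPolynomial.weightedGradedAlgebra in
theorem MvPolynomial.weightedHomogeneousComponent_mul_of_left {σ R M : Type*} [CommSemiring R]
    [AddCommMonoid M] [PartialOrder M] [CanonicallyOrderedAdd M] [Sub M] [OrderedSub M]
    [AddLeftReflectLE M] {w : σ → M} {φ : MvPolynomial σ R} {a : M}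
    (hφ : φ.IsWeightedHomogeneous w a) (b : M) (g : MvPolynomial σ R) :
    weightedHomogeneousComponent w (a + b) (φ * g) = φ * weightedHomogeneousComponent w b g := by
  classical
  simpa only [add_tsub_cancel_left, ← DirectSum.Decomposition.decompose'_eq,
    weightedDecomposition.decompose'_apply] using
    DirectSum.coe_decompose_mul_of_left_mem_of_le (weightedHomogeneousSubmodule R w)
      (b := g) (n := a + b) hφ le_self_add

theorem MvPolynomial.mem_span_mul_weightedHomogeneousSubmodule {σ R M ι : Type*}
    [CommSemiring R]
    [AddCommMonoid M] [PartialOrder M] [CanonicallyOrderedAdd M] [Sub M] [OrderedSub M]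
    [AddLeftReflectLE M] [Fintype ι] {w : σ → M} {a b : M} {g : ι → MvPolynomial σ R}
    (hg : ∀ i, (g i).IsWeightedHomogeneous w a) {f : MvPolynomial σ R}
    (hf : f.IsWeightedHomogeneous w (a + b)) (hfg : f ∈ Ideal.span (Set.range g)) :
    f ∈ Submodule.span R (Set.range g) * weightedHomogeneousSubmodule R w b := by
  obtain ⟨c, rfl⟩ := Ideal.mem_span_range_iff_exists_fun.1 hfg
  rw [← hf.weightedHomogeneousComponent_same, map_sum]
  refine Submodule.sum_mem _ fun i _ => ?_
  rw [mul_comm (c i), weightedHomogeneousComponent_mul_of_left (hg i)]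
  exact Submodule.mul_mem_mul (Submodule.subset_span ⟨i, rfl⟩)
    (weightedHomogeneousComponent_mem _ _ _)

theorem Submodule.span_range_pow_le {R A : Type*} [CommSemiring R] [CommSemiring A] [Algebra R A]
    [DecidableEq A] {r : ℕ} (g : Fin r → A) (k : ℕ) :
    span R (Set.range g) ^ k ≤
      span R ↑((Nat.antidiagonalTuple r k).image fun α => ∏ i, g i ^ α i) := by
  induction k with
  | zero =>
    rw [pow_zero, one_eq_span, span_le, Set.singleton_subset_iff]
    exact subset_span (mem_image.2 ⟨0, by simp [Nat.mem_antidiagonalTuple], by simp⟩)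
  | succ k ih =>
    rw [pow_succ]
    refine (mul_le_mul_left ih _).trans ?_
    rw [span_mul_span, coe_image, coe_image]
    refine span_mono ?_
    rintro _ ⟨_, ⟨α, hα, rfl⟩, _, ⟨i, rfl⟩, rfl⟩
    refine ⟨α + Pi.single i 1, ?_, ?_⟩
    · simp_all [Nat.mem_antidiagonalTuple, Finset.sum_add_distrib]
    · simp only [Pi.add_apply, pow_add, prod_mul_distrib]
      simp [Pi.single_apply, pow_ite]

namespace Finset.Nat

theorem card_antidiagonalTuple_succ_le (r k : ℕ) :
    #(antidiagonalTuple (r + 1) k) ≤ (k + 1) ^ r := by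
  calc #(antidiagonalTuple (r + 1) k)
      ≤ #(Fintype.piFinset fun _ : Fin r => range (k + 1)) := by
        refine card_le_card_of_injOn Fin.init (fun α hα => ?_) fun α hα β hβ h => ?_
        · simp only [mem_coe, mem_antidiagonalTuple, Fintype.mem_piFinset, mem_range] at hα ⊢
          exact fun i => Nat.lt_succ_of_le
            (hα ▸ single_le_sum (f := α) (fun _ _ => Nat.zero_le _) (mem_univ _))
        · rw [mem_coe, mem_antidiagonalTuple, Fin.sum_univ_castSucc] at hα hβ
          have hinit : ∀ i : Fin r, α i.castSucc = β i.castSucc := congrFun h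
          have hlast : α (Fin.last r) = β (Fin.last r) := by
            simp only [hinit] at hα; omega
          rw [← Fin.snoc_init_self α, ← Fin.snoc_init_self β, h, hlast]
    _ = (k + 1) ^ r := by simp

theorem pow_le_card_antidiagonalTuple_succ {r q k : ℕ} (h : r * q ≤ k) :
    (q + 1) ^ r ≤ #(antidiagonalTuple (r + 1) k) := by
  calc (q + 1) ^ r = #(Fintype.piFinset fun _ : Fin r => range (q + 1)) := by simp
    _ ≤ #(antidiagonalTuple (r + 1) k) := by
        refine card_le_card_of_injOn (fun γ => Fin.snoc γ (k - ∑ i, γ i)) (fun γ hγ => ?_)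
          fun γ _ δ _ hγδ => by simpa using congrArg Fin.init hγδ
        simp only [mem_coe, Fintype.mem_piFinset, mem_range] at hγ
        have : ∑ i, γ i ≤ k := calc
          ∑ i, γ i ≤ ∑ _i : Fin r, q := sum_le_sum fun i _ => Nat.le_of_lt_succ (hγ i)
          _ ≤ k := by simpa [mul_comm] using h
        simp [mem_antidiagonalTuple, Fin.sum_univ_castSucc, this]

end Finset.Nat

def bidegree (m n : ℕ) : Fin m ⊕ Fin n → ℕ × ℕ := Sum.elim (fun _ => (1, 0)) (fun _ => (0, 1))

abbrev bihomogeneousSubmodule (R : Type*) [CommSemiring R] (m n d : ℕ) :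
    Submodule R (MvPolynomial (Fin m ⊕ Fin n) R) :=
  weightedHomogeneousSubmodule R (bidegree m n) (d, d)

section Bihomogeneous

variable {R : Type*} [CommSemiring R] {m n : ℕ}

theorem weight_bidegree (s : Fin m ⊕ Fin n →₀ ℕ) :
    Finsupp.weight (bidegree m n) s = (∑ j, s (.inl j), ∑ k, s (.inr k)) := by
  rw [Finsupp.weight_apply, Finsupp.sum_fintype _ _ (by simp), Fintype.sum_sum_type]
  ext <;> simp [bidegree, Prod.fst_sum, Prod.snd_sum]

theorem isWeightedHomogeneous_X_mul_X (j : Fin m) (k : Fin n) :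
    (X (.inl j) * X (.inr k) : MvPolynomial (Fin m ⊕ Fin n) R).IsWeightedHomogeneous
      (bidegree m n) (1, 1) :=
  (isWeightedHomogeneous_X R _ _).mul (isWeightedHomogeneous_X R _ _)

theorem bihomogeneousSubmodule_fg (K : Type*) [Field K] (m n d : ℕ) :
    (bihomogeneousSubmodule K m n d).FG := by
  rw [bihomogeneousSubmodule, weightedHomogeneousSubmodule_eq_finsupp_supported,
    AddMonoidAlgebra.supported_eq_span_single]
  refine Submodule.fg_span (Set.Finite.image _ ?_)
  refine (Finsupp.finite_of_nat_weight_eq 1 (fun _ => one_ne_zero) (d + d)).subset fun s hs => ?_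
  simp only [Set.mem_ofPred_eq, weight_bidegree, Prod.mk.injEq] at hs
  simp [Finsupp.weight_apply, Finsupp.sum_fintype, Fintype.sum_sum_type, hs.1, hs.2]

theorem bihomogeneousSubmodule_le_ideal {N d : ℕ} {I : Ideal (MvPolynomial (Fin m ⊕ Fin n) R)}
    (hI : ∀ j k, (X (.inl j) * X (.inr k)) ^ N ∈ I) (hm : m * N < d) (hn : n * N < d) :
    bihomogeneousSubmodule R m n d ≤ I.restrictScalars R := by
  intro f hf
  rw [f.as_sum]
  refine Ideal.sum_mem _ fun s hs => ?_
  have hs := hf (mem_support_iff.1 hs)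
  simp only [weight_bidegree, Prod.mk.injEq] at hs
  obtain ⟨j, -, hj⟩ := exists_lt_of_sum_lt (s := univ) (f := fun _ : Fin m => N)
    (g := fun j => s (.inl j)) (by simpa [hs.1, mul_comm] using hm)
  obtain ⟨k, -, hk⟩ := exists_lt_of_sum_lt (s := univ) (f := fun _ : Fin n => N)
    (g := fun k => s (.inr k)) (by simpa [hs.2, mul_comm] using hn)
  refine Ideal.mem_of_dvd _ ?_ (hI j k)
  rw [mul_pow, X_pow_eq_monomial, X_pow_eq_monomial, monomial_mul, one_mul, monomial_dvd_monomial]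
  refine ⟨Or.inr fun x => ?_, one_dvd _⟩
  rcases x with x | x
  · obtain rfl | h := eq_or_ne x j
    · simpa using hj.le
    · simp [h]
  · obtain rfl | h := eq_or_ne x k
    · simpa using hk.le
    · simp [h]

variable {K : Type*} [Field K] {ι : Type*} [Fintype ι]

theorem bihomogeneousSubmodule_succ_le {g : ι → MvPolynomial (Fin m ⊕ Fin n) K}
    (hg : ∀ i, g i ∈ bihomogeneousSubmodule K m n 1) {N d : ℕ}
    (hN : ∀ j k, (X (.inl j) * X (.inr k)) ^ N ∈ Ideal.span (Set.range g))
    (hm : m * N ≤ d) (hn : n * N ≤ d) :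
    bihomogeneousSubmodule K m n (d + 1) ≤
      Submodule.span K (Set.range g) * bihomogeneousSubmodule K m n d := by
  intro f hf
  refine mem_span_mul_weightedHomogeneousSubmodule (a := (1, 1)) hg ?_
    (bihomogeneousSubmodule_le_ideal hN (by omega) (by omega) hf)
  simpa [add_comm] using hf

theorem bihomogeneousSubmodule_add_le_pow_mul {g : ι → MvPolynomial (Fin m ⊕ Fin n) K}
    (hg : ∀ i, g i ∈ bihomogeneousSubmodule K m n 1) {N D : ℕ}
    (hN : ∀ j k, (X (.inl j) * X (.inr k)) ^ N ∈ Ideal.span (Set.range g))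
    (hm : m * N ≤ D) (hn : n * N ≤ D) (k : ℕ) :
    bihomogeneousSubmodule K m n (D + k) ≤
      Submodule.span K (Set.range g) ^ k * bihomogeneousSubmodule K m n D := by
  induction k with
  | zero => simp
  | succ k ih =>
    calc bihomogeneousSubmodule K m n (D + k + 1)
        ≤ Submodule.span K (Set.range g) * bihomogeneousSubmodule K m n (D + k) :=
          bihomogeneousSubmodule_succ_le hg hN (by omega) (by omega)
      _ ≤ Submodule.span K (Set.range g) ^ (k + 1) * bihomogeneousSubmodule K m n D := by
          rw [pow_succ', mul_assoc]
          exact mul_le_mul_right ih _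

end Bihomogeneous

section Counting

open Finset.Nat

variable {K : Type*} [Field K] {m n : ℕ}

theorem card_mul_card_le_of_bihomogeneousSubmodule_le_span {d : ℕ}
    {Q : Finset (MvPolynomial (Fin m ⊕ Fin n) K)}
    (h : bihomogeneousSubmodule K m n d ≤ Submodule.span K Q) :
    #(antidiagonalTuple m d) * #(antidiagonalTuple n d) ≤ #Q := by
  let e : antidiagonalTuple m d ×ˢ antidiagonalTuple n d → (Fin m ⊕ Fin n →₀ ℕ) :=
    fun p => Finsupp.equivFunOnFinite.symm (Sum.elim p.1.1 p.1.2)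
  have he : Function.Injective e := fun p p' hpp' => by
    have := congrArg (⇑) hpp'
    simp only [e, Finsupp.coe_equivFunOnFinite_symm, Sum.elim_eq_iff] at this
    exact Subtype.ext (Prod.ext this.1 this.2)
  have hmem : ∀ p, monomial (e p) (1 : K) ∈ Submodule.span K Q := fun p => by
    obtain ⟨⟨a, b⟩, hab⟩ := p
    simp only [mem_product, mem_antidiagonalTuple] at hab
    exact h (isWeightedHomogeneous_monomial _ _ _ (by simp [e, weight_bidegree, hab.1, hab.2]))
  have hli : LinearIndependent K fun p => monomial (e p) (1 : K) := by
    simpa [Function.comp_def] using (basisMonomials _ K).linearIndependent.comp e he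
  calc #(antidiagonalTuple m d) * #(antidiagonalTuple n d)
      = Fintype.card (antidiagonalTuple m d ×ˢ antidiagonalTuple n d) := by simp
    _ = Module.finrank K (Submodule.span K (Set.range fun p => monomial (e p) (1 : K))) :=
        (finrank_span_eq_card hli).symm
    _ ≤ Module.finrank K (Submodule.span K (Q : Set (MvPolynomial _ K))) :=
        Submodule.finrank_mono (Submodule.span_le.2 (Set.range_subset_iff.2 hmem))
    _ ≤ #Q := finrank_span_finset_le_card Q

theorem exists_card_mul_card_antidiagonalTuple_le {r N : ℕ}
    {g : Fin (r + 1) → MvPolynomial (Fin m ⊕ Fin n) K}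
    (hg : ∀ i, g i ∈ bihomogeneousSubmodule K m n 1)
    (hN : ∀ j k, (X (.inl j) * X (.inr k)) ^ N ∈ Ideal.span (Set.range g)) :
    ∃ c, ∀ k, #(antidiagonalTuple m (m * N + n * N + k)) *
      #(antidiagonalTuple n (m * N + n * N + k)) ≤ (k + 1) ^ r * c := by
  classical
  obtain ⟨S, hS⟩ := bihomogeneousSubmodule_fg K m n (m * N + n * N)
  refine ⟨#S, fun k => ?_⟩
  let P := (antidiagonalTuple (r + 1) k).image fun α => ∏ i, g i ^ α i
  refine (card_mul_card_le_of_bihomogeneousSubmodule_le_span (Q := P * S) ?_).trans ?_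
  · calc bihomogeneousSubmodule K m n (m * N + n * N + k)
        ≤ Submodule.span K (Set.range g) ^ k * bihomogeneousSubmodule K m n (m * N + n * N) :=
          bihomogeneousSubmodule_add_le_pow_mul hg hN (by omega) (by omega) k
      _ ≤ Submodule.span K P * Submodule.span K S := by
          have hpow := Submodule.span_range_pow_le (R := K) g k
          exact mul_le_mul' hpow hS.ge
      _ = Submodule.span K ↑(P * S) := by rw [Submodule.span_mul_span, Finset.coe_mul]
  · exact card_mul_le.trans
      (Nat.mul_le_mul_right _ (card_image_le.trans (card_antidiagonalTuple_succ_le r k)))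

theorem not_forall_X_mul_X_pow_mem_ideal_span (hm : 0 < m) (hn : 0 < n) {r : ℕ}
    (hr : r + 3 ≤ m + n) {g : Fin (r + 1) → MvPolynomial (Fin m ⊕ Fin n) K}
    (hg : ∀ i, g i ∈ bihomogeneousSubmodule K m n 1) (N : ℕ) :
    ¬ ∀ j k, (X (.inl j) * X (.inr k)) ^ N ∈ Ideal.span (Set.range g) := by
  intro hN
  obtain ⟨c, hc⟩ := exists_card_mul_card_antidiagonalTuple_le hg hN
  obtain ⟨m', rfl⟩ : ∃ m', m = m' + 1 := ⟨m - 1, by omega⟩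
  obtain ⟨n', rfl⟩ : ∃ n', n = n' + 1 := ⟨n - 1, by omega⟩
  set M := m' + 1 + (n' + 1)
  set q := M ^ r * c
  have hk : ∀ a ≤ M, a * q ≤ (m' + 1) * N + (n' + 1) * N + M * q := fun a ha =>
    le_add_left (Nat.mul_le_mul_right q ha)
  have : (q + 1) ^ (r + 1) < (q + 1) ^ (r + 1) := calc
    (q + 1) ^ (r + 1) ≤ (q + 1) ^ m' * (q + 1) ^ n' := by
      rw [← pow_add]; exact Nat.pow_le_pow_right (by omega) (by omega)
    _ ≤ (M * q + 1) ^ r * c :=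
      (Nat.mul_le_mul (pow_le_card_antidiagonalTuple_succ (hk m' (by omega)))
        (pow_le_card_antidiagonalTuple_succ (hk n' (by omega)))).trans (hc (M * q))
    _ ≤ (M * (q + 1)) ^ r * c :=
      Nat.mul_le_mul_right _ (Nat.pow_le_pow_left (by rw [mul_add]; omega) r)
    _ = q * (q + 1) ^ r := by rw [mul_pow]; ring
    _ < (q + 1) ^ (r + 1) := by
      rw [pow_succ']; exact Nat.mul_lt_mul_of_pos_right (Nat.lt_succ_self q) (by positivity)
  exact lt_irrefl _ this

end Counting

theorem exists_ne_zero_dotProduct_kron_eq_zero {K : Type*} [Field K] [IsAlgClosed K]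
    {m n r : ℕ} (hm : 0 < m) (hn : 0 < n) (hr : r ≤ m + n - 2)
    (w : Fin r → Fin m × Fin n → K) :
    ∃ u : Fin m → K, ∃ v : Fin n → K, u ≠ 0 ∧ v ≠ 0 ∧
      ∀ i, w i ⬝ᵥ (fun p => u p.1 * v p.2) = 0 := by
  have hne : ∀ {l : ℕ}, 0 < l → (1 : Fin l → K) ≠ 0 := fun hl h =>
    one_ne_zero (congrFun h ⟨0, hl⟩)
  rcases r with _ | r
  · exact ⟨1, 1, hne hm, hne hn, fun i => i.elim0⟩
  by_contra! hw
  let g : Fin (r + 1) → MvPolynomial (Fin m ⊕ Fin n) K :=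
    fun i => ∑ p, C (w i p) * (X (.inl p.1) * X (.inr p.2))
  have hg : ∀ i, g i ∈ bihomogeneousSubmodule K m n 1 := fun i =>
    Submodule.sum_mem _ fun p _ => (isWeightedHomogeneous_X_mul_X p.1 p.2).C_mul _
  have hradical : Ideal.span (Set.range fun p : Fin m × Fin n => X (.inl p.1) * X (.inr p.2)) ≤
      (Ideal.span (Set.range g)).radical := by
    rw [← vanishingIdeal_zeroLocus_eq_radical (K := K), Ideal.span_le]
    rintro _ ⟨p, rfl⟩ x hx
    have hgx : ∀ i, w i ⬝ᵥ (fun p => x (.inl p.1) * x (.inr p.2)) = 0 := fun i => by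
      simpa [g, dotProduct] using (mem_zeroLocus_iff.1 hx) _ (Ideal.subset_span ⟨i, rfl⟩)
    by_contra hp
    rw [← ne_eq, map_mul, aeval_X, aeval_X, mul_ne_zero_iff] at hp
    obtain ⟨i, hi⟩ := hw (fun j => x (.inl j)) (fun k => x (.inr k))
      (Function.ne_iff.2 ⟨p.1, hp.1⟩) (Function.ne_iff.2 ⟨p.2, hp.2⟩)
    exact hi (hgx i)
  obtain ⟨N, hN⟩ := Ideal.exists_pow_le_of_le_radical_of_fg hradical
    (Submodule.fg_span (Set.finite_range _))
  exact not_forall_X_mul_X_pow_mem_ideal_span hm hn (by omega) hg N fun j k =>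
    hN (Ideal.pow_mem_pow (Ideal.subset_span (Set.mem_range_self (j, k))) N)

theorem Matrix.exists_ne_zero_mulVec_kron_eq_zero_of_rank_le {K : Type*} [Field K] [IsAlgClosed K]
    {ι : Type*} [Fintype ι] {m n : ℕ} (hm : 0 < m) (hn : 0 < n)
    (A : Matrix ι (Fin m × Fin n) K) (hA : A.rank ≤ m + n - 2) :
    ∃ u : Fin m → K, ∃ v : Fin n → K, u ≠ 0 ∧ v ≠ 0 ∧ A *ᵥ (fun p => u p.1 * v p.2) = 0 := by
  let b := Module.finBasis K (Submodule.span K (Set.range A.row))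
  obtain ⟨u, v, hu, hv, hb⟩ := exists_ne_zero_dotProduct_kron_eq_zero hm hn
    (A.rank_eq_finrank_span_row ▸ hA) fun i => (b i : Fin m × Fin n → K)
  refine ⟨u, v, hu, hv, funext fun t => ?_⟩
  have hrow := congrArg Subtype.val (b.sum_repr ⟨A t, Submodule.subset_span ⟨t, rfl⟩⟩)
  rw [Submodule.coe_sum] at hrow
  change A t ⬝ᵥ _ = 0
  rw [show A t = _ from hrow.symm]
  simp [sum_dotProduct, smul_dotProduct, hb]

theorem Matrix.exists_mem_unitaryGroup_row_eq_smul_star {𝕜 ι : Type*} [RCLike 𝕜] [Fintype ι]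
    [DecidableEq ι] (i₀ : ι) {u : ι → 𝕜} (hu : u ≠ 0) :
    ∃ U ∈ unitaryGroup ι 𝕜, ∃ c : 𝕜, U i₀ = c • star u := by
  let x : EuclideanSpace 𝕜 ι := (‖WithLp.toLp 2 u‖⁻¹ : 𝕜) • WithLp.toLp 2 u
  have hx : ‖x‖ = 1 := norm_smul_inv_norm (by simpa using hu)
  obtain ⟨b, hb⟩ := Orthonormal.exists_orthonormalBasis_extension_of_card_eq (𝕜 := 𝕜)
    (v := fun _ => x) (s := {i₀}) (by simp)
    ⟨fun _ => hx, fun i j hij => (hij (Subsingleton.elim i j)).elim⟩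
  refine ⟨star ((EuclideanSpace.basisFun ι 𝕜).toBasis.toMatrix b),
    Unitary.star_mem (OrthonormalBasis.toMatrix_orthonormalBasis_mem_unitary _ _),
    star (‖WithLp.toLp 2 u‖⁻¹ : 𝕜), funext fun j => ?_⟩
  simp [Module.Basis.toMatrix_apply, hb i₀ rfl, x]

/-- For a bipartite state `η` on `ℂ^m ⊗ ℂ^n` of rank `r` with `1 ≤ r ≤ m + n - 2`, there
are local unitaries `U`, `V` such that the last diagonal entry (at index
`(m-1, n-1)`) of `(U ⊗ V) η (U ⊗ V)†` vanishes. -/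
theorem exists_LU_last_diagonal_zero {m n r : ℕ} (hm : 0 < m) (hn : 0 < n)
    (η : Matrix (Fin m × Fin n) (Fin m × Fin n) ℂ)
    (hrank : η.rank = r) (hr2 : r ≤ m + n - 2) :
    ∃ U ∈ Matrix.unitaryGroup (Fin m) ℂ, ∃ V ∈ Matrix.unitaryGroup (Fin n) ℂ,
      ((U ⊗ₖ V) * η * (U ⊗ₖ V)ᴴ)
        (⟨m - 1, by omega⟩, ⟨n - 1, by omega⟩) (⟨m - 1, by omega⟩, ⟨n - 1, by omega⟩) = 0 := by
  obtain ⟨u, v, hu, hv, hker⟩ :=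
    η.exists_ne_zero_mulVec_kron_eq_zero_of_rank_le hm hn (hrank ▸ hr2)
  obtain ⟨U, hU, a, hUrow⟩ := Matrix.exists_mem_unitaryGroup_row_eq_smul_star ⟨m - 1, by omega⟩ hu
  obtain ⟨V, hV, b, hVrow⟩ := Matrix.exists_mem_unitaryGroup_row_eq_smul_star ⟨n - 1, by omega⟩ hv
  refine ⟨U, hU, V, hV, ?_⟩
  have hcol : (U ⊗ₖ V)ᴴᵀ (⟨m - 1, by omega⟩, ⟨n - 1, by omega⟩) =
      star (a * b) • fun p => u p.1 * v p.2 := by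
    ext p
    simp [hUrow, hVrow]
    ring
  rw [Matrix.mul_mul_apply, hcol, Matrix.mulVec_smul, hker, smul_zero, dotProduct_zero]
end
end

section
/- Let ρ = ρ_{A₁A₂} ⊗ ρ_{A₃A₄} be a four-qubit state which is the tensor product of two two-qubit states. If one of the factors ρ_{A₁A₂}, ρ_{A₃A₄} has rank at least 3 and the other factor is not pure (has rank at least 2), then ρ is not 2-UDA. -/
noncomputable section
open scoped Matrix Kronecker ComplexOrder

namespace FourQubitAux



lemma psd_vecMulVec {n : Type*} [Fintype n] (v : n → ℂ) :
    (Matrix.vecMulVec v (star v)).PosSemidef := by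
  refine Matrix.PosSemidef.of_dotProduct_mulVec_nonneg ?_ ?_
  · ext i j
    simp [Matrix.conjTranspose_apply, Matrix.vecMulVec_apply, mul_comm]
  · intro x
    have h1 : Matrix.vecMulVec v (star v) *ᵥ x = (star v ⬝ᵥ x) • v := by
      funext i
      simp [Matrix.mulVec, Matrix.vecMulVec_apply, dotProduct, Finset.mul_sum,
        mul_comm, mul_left_comm]
    rw [h1]
    have h2 : star x ⬝ᵥ ((star v ⬝ᵥ x) • v) = (star (star v ⬝ᵥ x)) * (star v ⬝ᵥ x) := by
      rw [dotProduct_smul]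
      have : star x ⬝ᵥ v = star (star v ⬝ᵥ x) := by
        simp [dotProduct, mul_comm]
      rw [this, smul_eq_mul]; ring
    rw [h2]
    exact star_mul_self_nonneg _

lemma kron_conjTranspose {n m : Type*} [Fintype n] [Fintype m]
    (A : Matrix n n ℂ) (B : Matrix m m ℂ) : (A ⊗ₖ B)ᴴ = Aᴴ ⊗ₖ Bᴴ := by
  ext ⟨a, c⟩ ⟨b, d⟩
  simp [Matrix.conjTranspose_apply]

lemma psd_kron {n m : Type*} [Fintype n] [Fintype m] [DecidableEq n] [DecidableEq m]
    {A : Matrix n n ℂ} {B : Matrix m m ℂ} (hA : A.PosSemidef) (hB : B.PosSemidef) :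
    (A ⊗ₖ B).PosSemidef := by
  exact hA.kronecker hB

lemma herm_qform_im {n : Type*} [Fintype n] {A : Matrix n n ℂ} (hA : A.IsHermitian)
    (x : n → ℂ) : (star x ⬝ᵥ (A *ᵥ x)).im = 0 := by
  have hAij : ∀ i j, (starRingEnd ℂ) (A i j) = A j i := by
    intro i j
    conv_rhs => rw [← hA]
    simp [Matrix.conjTranspose_apply]
  have key : (starRingEnd ℂ) (star x ⬝ᵥ (A *ᵥ x)) = star x ⬝ᵥ (A *ᵥ x) := by
    simp only [dotProduct, Matrix.mulVec, Pi.star_apply, map_sum, map_mul,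
      Finset.mul_sum, RCLike.star_def, Complex.conj_conj, hAij]
    rw [Finset.sum_comm]
    exact Finset.sum_congr rfl fun i _ => Finset.sum_congr rfl fun j _ => by ring
  exact Complex.conj_eq_iff_im.mp key

/-- Key perturbation lemma: if `|x* A x| ≤ Re (x* M x)` for all `x`, with `M` PSD and
`A` Hermitian, then `M + A` is PSD. -/
lemma psd_add_of_abs_le {n : Type*} [Fintype n] {M A : Matrix n n ℂ} (hM : M.PosSemidef)
    (hA : A.IsHermitian)
    (hb : ∀ x : n → ℂ, ‖star x ⬝ᵥ (A *ᵥ x)‖ ≤ (star x ⬝ᵥ (M *ᵥ x)).re) :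
    (M + A).PosSemidef := by
  refine Matrix.PosSemidef.of_dotProduct_mulVec_nonneg (hM.1.add hA) fun x => ?_
  rw [Matrix.add_mulVec, dotProduct_add]
  rw [Complex.le_def]
  constructor
  · simp only [Complex.zero_re, Complex.add_re]
    have h2 := Complex.abs_re_le_norm (star x ⬝ᵥ (A *ᵥ x))
    have h3 := neg_abs_le ((star x ⬝ᵥ (A *ᵥ x)).re)
    linarith [hb x]
  · simp only [Complex.zero_im, Complex.add_im, herm_qform_im hM.1 x, herm_qform_im hA x,
      add_zero]


lemma psd_real_smul {n : Type*} [Fintype n] {M : Matrix n n ℂ} (hM : M.PosSemidef)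
    {r : ℝ} (hr : 0 ≤ r) : ((r : ℂ) • M).PosSemidef := by
  refine Matrix.PosSemidef.of_dotProduct_mulVec_nonneg ?_ ?_
  · have hs : star ((r:ℂ)) = (r:ℂ) := by simp [RCLike.star_def, Complex.conj_ofReal]
    unfold Matrix.IsHermitian
    rw [Matrix.conjTranspose_smul, hM.1, hs]
  · intro x
    rw [Matrix.smul_mulVec, dotProduct_smul]
    have := hM.dotProduct_mulVec_nonneg x
    have hr' : (0:ℂ) ≤ (r:ℂ) := by
      rw [Complex.le_def]; simp [hr]
    calc (0:ℂ) = (r:ℂ) * 0 := by ring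
    _ ≤ (r:ℂ) * (star x ⬝ᵥ (M *ᵥ x)) := by
        exact mul_le_mul_of_nonneg_left this hr'
    _ = (r:ℂ) • (star x ⬝ᵥ (M *ᵥ x)) := by rw [smul_eq_mul]

lemma psd_sum {n ι : Type*} [Fintype n] [Fintype ι] (f : ι → Matrix n n ℂ)
    (hf : ∀ i, (f i).PosSemidef) : (∑ i, f i).PosSemidef := by
  classical
  refine Finset.sum_induction f _ (fun a b ha hb => ha.add hb) Matrix.PosSemidef.zero
    fun i _ => hf i

/-- Spectral decomposition package for a PSD matrix with rank at least `k`. -/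
lemma spectral_package {n : Type*} [Fintype n] [DecidableEq n] {M : Matrix n n ℂ}
    (hM : M.PosSemidef) (k : ℕ) (hrank : k ≤ M.rank) :
    ∃ (u : n → (n → ℂ)) (lam : n → ℝ) (g : Fin k → n),
      (∀ j l, star (u j) ⬝ᵥ u l = if j = l then (1:ℂ) else 0) ∧
      (M = ∑ j, (lam j : ℂ) • Matrix.vecMulVec (u j) (star (u j))) ∧
      (∀ j, 0 ≤ lam j) ∧ Function.Injective g ∧ (∀ i, 0 < lam (g i)) := by
  have hH := hM.1
  set U : Matrix n n ℂ := (Matrix.IsHermitian.eigenvectorUnitary hH : Matrix n n ℂ) with hU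
  have hUU : star U * U = 1 := by
    rw [hU]
    exact Unitary.coe_star_mul_self _
  have hcard : k ≤ Fintype.card {i // hH.eigenvalues i ≠ 0} := by
    rw [← hH.rank_eq_card_non_zero_eigs]; exact hrank
  obtain ⟨emb⟩ : Nonempty (Fin k ↪ {i // hH.eigenvalues i ≠ 0}) :=
    Function.Embedding.nonempty_of_card_le (by simpa using hcard)
  refine ⟨fun j => fun i => U i j, hH.eigenvalues, fun i => (emb i).1, ?_, ?_,
    hM.eigenvalues_nonneg, ?_, ?_⟩
  · intro j l
    have h1 : (star U * U) j l = (1 : Matrix n n ℂ) j l := by rw [hUU]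
    rw [Matrix.mul_apply] at h1
    simp only [Matrix.star_apply, Matrix.one_apply] at h1
    simpa [dotProduct, Pi.star_apply] using h1
  · have hspec := hH.spectral_theorem
    conv_lhs => rw [hspec, Unitary.conjStarAlgAut_apply]
    ext i i'
    simp [Matrix.mul_apply, Matrix.diagonal_apply, Matrix.star_apply, Finset.sum_mul,
      Matrix.sum_apply, Matrix.vecMulVec_apply, ite_mul, zero_mul, Finset.sum_ite_eq,
      RCLike.star_def]
    simp only [hU, Matrix.IsHermitian.eigenvectorUnitary_apply]
    exact Finset.sum_congr rfl fun x _ => by ring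
  · exact fun a b hab => emb.injective (Subtype.coe_injective hab)
  · intro i
    exact lt_of_le_of_ne (hM.eigenvalues_nonneg _) (Ne.symm (emb i).2)


def ptrL (X : Matrix (Fin 2 × Fin 2) (Fin 2 × Fin 2) ℂ) : Matrix (Fin 2) (Fin 2) ℂ :=
  Matrix.of fun a b => ∑ c, X (c, a) (c, b)

def ptrR (X : Matrix (Fin 2 × Fin 2) (Fin 2 × Fin 2) ℂ) : Matrix (Fin 2) (Fin 2) ℂ :=
  Matrix.of fun a b => ∑ c, X (a, c) (b, c)

/-- `Asum c u = ∑ j k, c j k • (u j) (u k)ᴴ` given entrywise. -/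
def Asum (c : Matrix (Fin 3) (Fin 3) ℂ) (u : Fin 3 → (Fin 2 × Fin 2 → ℂ)) :
    Matrix (Fin 2 × Fin 2) (Fin 2 × Fin 2) ℂ :=
  Matrix.of fun p q => ∑ j, ∑ k, c j k * (u j p * star (u k q))

lemma Asum_add (c d : Matrix (Fin 3) (Fin 3) ℂ) (u : Fin 3 → (Fin 2 × Fin 2 → ℂ)) :
    Asum (c + d) u = Asum c u + Asum d u := by
  ext p q
  simp [Asum, add_mul, Finset.sum_add_distrib]

lemma Asum_smul (z : ℂ) (c : Matrix (Fin 3) (Fin 3) ℂ) (u : Fin 3 → (Fin 2 × Fin 2 → ℂ)) :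
    Asum (z • c) u = z • Asum c u := by
  ext p q
  simp [Asum, Finset.mul_sum, mul_assoc]

lemma Asum_sub (c d : Matrix (Fin 3) (Fin 3) ℂ) (u : Fin 3 → (Fin 2 × Fin 2 → ℂ)) :
    Asum (c - d) u = Asum c u - Asum d u := by
  ext p q
  simp [Asum, sub_mul, Finset.sum_sub_distrib]

lemma Asum_conjTranspose (c : Matrix (Fin 3) (Fin 3) ℂ) (u : Fin 3 → (Fin 2 × Fin 2 → ℂ)) :
    (Asum c u)ᴴ = Asum cᴴ u := by
  ext p q
  simp only [Matrix.conjTranspose_apply, Asum, Matrix.of_apply, map_sum, map_mul,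
    RCLike.star_def, Complex.conj_conj]
  rw [Finset.sum_comm]
  refine Finset.sum_congr rfl fun j _ => Finset.sum_congr rfl fun k _ => by ring

lemma ptrL_add (X Y) : ptrL (X + Y) = ptrL X + ptrL Y := by
  ext a b; simp [ptrL, Finset.sum_add_distrib]

lemma ptrR_add (X Y) : ptrR (X + Y) = ptrR X + ptrR Y := by
  ext a b; simp [ptrR, Finset.sum_add_distrib]

lemma ptrL_smul (z : ℂ) (X) : ptrL (z • X) = z • ptrL X := by
  ext a b; simp [ptrL, Finset.mul_sum, mul_add]

lemma ptrR_smul (z : ℂ) (X) : ptrR (z • X) = z • ptrR X := by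
  ext a b; simp [ptrR, Finset.mul_sum, mul_add]

lemma ptrL_sub (X Y) : ptrL (X - Y) = ptrL X - ptrL Y := by
  ext a b; simp [ptrL, Finset.sum_sub_distrib]

lemma ptrR_sub (X Y) : ptrR (X - Y) = ptrR X - ptrR Y := by
  ext a b; simp [ptrR, Finset.sum_sub_distrib]

lemma ptrL_conjTranspose (X) : ptrL (Xᴴ) = (ptrL X)ᴴ := by
  ext a b; simp [ptrL, Matrix.conjTranspose_apply, map_sum]

lemma ptrR_conjTranspose (X) : ptrR (Xᴴ) = (ptrR X)ᴴ := by
  ext a b; simp [ptrR, Matrix.conjTranspose_apply, map_sum]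

/-- The pair of partial traces of `Asum · u`, as a linear map. -/
def ptrPair (u : Fin 3 → (Fin 2 × Fin 2 → ℂ)) :
    Matrix (Fin 3) (Fin 3) ℂ →ₗ[ℂ] (Matrix (Fin 2) (Fin 2) ℂ × Matrix (Fin 2) (Fin 2) ℂ) where
  toFun c := (ptrL (Asum c u), ptrR (Asum c u))
  map_add' a b := by simp [Asum_add, ptrL_add, ptrR_add, Prod.ext_iff]
  map_smul' z a := by simp [Asum_smul, ptrL_smul, ptrR_smul, Prod.ext_iff]

lemma exists_coeff (u : Fin 3 → (Fin 2 × Fin 2 → ℂ)) :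
    ∃ c : Matrix (Fin 3) (Fin 3) ℂ, c ≠ 0 ∧ ptrL (Asum c u) = 0 ∧ ptrR (Asum c u) = 0 := by
  have hni : ¬ Function.Injective (ptrPair u) := by
    intro hinj
    have h9 := LinearMap.finrank_le_finrank_of_injective hinj
    rw [Module.finrank_matrix, Module.finrank_prod, Module.finrank_matrix] at h9
    simp [Fintype.card_fin, Module.finrank_self] at h9
  rw [Function.not_injective_iff] at hni
  obtain ⟨a, b, hab, hne⟩ := hni
  have hz : ptrPair u (a - b) = 0 := by rw [map_sub, hab, sub_self]
  have h1 : ptrL (Asum (a - b) u) = 0 := congrArg Prod.fst hz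
  have h2 : ptrR (Asum (a - b) u) = 0 := congrArg Prod.snd hz
  exact ⟨a - b, sub_ne_zero.mpr hne, h1, h2⟩


lemma vecMulVec_mulVec {n : Type*} [Fintype n] (a b y : n → ℂ) :
    Matrix.vecMulVec a b *ᵥ y = (b ⬝ᵥ y) • a := by
  funext i
  simp only [Matrix.mulVec, Matrix.vecMulVec_apply, dotProduct, Pi.smul_apply,
    smul_eq_mul, Finset.sum_mul]
  exact Finset.sum_congr rfl fun x _ => by ring

lemma sum_mulVec' {ι n m : Type*} [Fintype ι] [Fintype m] (f : ι → Matrix n m ℂ) (x : m → ℂ) :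
    (∑ i, f i) *ᵥ x = ∑ i, f i *ᵥ x := by
  funext j
  simp [Matrix.mulVec, dotProduct, Matrix.sum_apply, Finset.sum_mul, Finset.sum_apply]
  rw [Finset.sum_comm]

lemma dotProduct_sum' {ι n : Type*} [Fintype ι] [Fintype n] (v : n → ℂ) (f : ι → n → ℂ) :
    v ⬝ᵥ (∑ i, f i) = ∑ i, v ⬝ᵥ f i := by
  simp [dotProduct, Finset.sum_apply, Finset.mul_sum]
  rw [Finset.sum_comm]

lemma dot_star_comm {n : Type*} [Fintype n] (a b : n → ℂ) :
    star a ⬝ᵥ b = star (star b ⬝ᵥ a) := by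
  simp only [dotProduct, Pi.star_apply, star_sum, star_mul', star_star]
  exact Finset.sum_congr rfl fun i _ => by ring

lemma Asum_eq_sum (c : Matrix (Fin 3) (Fin 3) ℂ) (u : Fin 3 → (Fin 2 × Fin 2 → ℂ)) :
    Asum c u = ∑ j, ∑ k, c j k • Matrix.vecMulVec (u j) (star (u k)) := by
  ext p q
  simp [Asum, Matrix.sum_apply, Matrix.vecMulVec_apply, mul_assoc]

lemma Asum_qform (c : Matrix (Fin 3) (Fin 3) ℂ) (u : Fin 3 → (Fin 2 × Fin 2 → ℂ))
    (x y : Fin 2 × Fin 2 → ℂ) :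
    star x ⬝ᵥ (Asum c u *ᵥ y) = ∑ j, ∑ k, c j k * ((star x ⬝ᵥ u j) * (star (u k) ⬝ᵥ y)) := by
  rw [Asum_eq_sum, sum_mulVec', dotProduct_sum']
  refine Finset.sum_congr rfl fun j _ => ?_
  rw [sum_mulVec', dotProduct_sum']
  refine Finset.sum_congr rfl fun k _ => ?_
  rw [Matrix.smul_mulVec, vecMulVec_mulVec, dotProduct_smul, dotProduct_smul]
  rw [smul_eq_mul, smul_eq_mul]
  ring

lemma Asum_inj (c : Matrix (Fin 3) (Fin 3) ℂ) (u : Fin 3 → (Fin 2 × Fin 2 → ℂ))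
    (hu : ∀ j l, star (u j) ⬝ᵥ u l = if j = l then (1:ℂ) else 0)
    (h0 : Asum c u = 0) : c = 0 := by
  have key : ∀ j l, c j l = 0 := by
    intro j l
    have h1 := Asum_qform c u (u j) (u l)
    rw [h0] at h1
    simp only [Matrix.zero_mulVec, dotProduct_zero, hu, ite_mul, mul_ite, one_mul,
      zero_mul, mul_one, mul_zero, Finset.sum_ite_eq, Finset.sum_ite_eq', Finset.mem_univ,
      if_true] at h1
    exact h1.symm
  ext j l
  exact key j l

lemma abs_prod_le_sum {t : Fin 3 → ℝ} (ht : ∀ i, 0 ≤ t i) (j k : Fin 3) :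
    t j * t k ≤ ∑ i, t i ^ 2 := by
  have hj : t j ^ 2 ≤ ∑ i, t i ^ 2 :=
    Finset.single_le_sum (fun i _ => sq_nonneg (t i)) (Finset.mem_univ j)
  have hk : t k ^ 2 ≤ ∑ i, t i ^ 2 :=
    Finset.single_le_sum (fun i _ => sq_nonneg (t i)) (Finset.mem_univ k)
  nlinarith [sq_nonneg (t j - t k), ht j, ht k]

lemma Asum_qform_bound (c : Matrix (Fin 3) (Fin 3) ℂ) (u : Fin 3 → (Fin 2 × Fin 2 → ℂ))
    (x : Fin 2 × Fin 2 → ℂ) :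
    ‖star x ⬝ᵥ (Asum c u *ᵥ x)‖ ≤
      (∑ j, ∑ k, ‖c j k‖) * ∑ j, ‖star (u j) ⬝ᵥ x‖ ^ 2 := by
  rw [Asum_qform]
  set s := ∑ j, ‖star (u j) ⬝ᵥ x‖ ^ 2 with hs
  calc ‖∑ j, ∑ k, c j k * ((star x ⬝ᵥ u j) * (star (u k) ⬝ᵥ x))‖
      ≤ ∑ j, ‖∑ k, c j k * ((star x ⬝ᵥ u j) * (star (u k) ⬝ᵥ x))‖ :=
        norm_sum_le _ _
    _ ≤ ∑ j, ∑ k, ‖c j k * ((star x ⬝ᵥ u j) * (star (u k) ⬝ᵥ x))‖ :=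
        Finset.sum_le_sum fun j _ => norm_sum_le _ _
    _ ≤ ∑ j, ∑ k, ‖c j k‖ * s := by
        refine Finset.sum_le_sum fun j _ => Finset.sum_le_sum fun k _ => ?_
        rw [norm_mul, norm_mul]
        refine mul_le_mul_of_nonneg_left ?_ (norm_nonneg _)
        have hx : ‖star x ⬝ᵥ u j‖ = ‖star (u j) ⬝ᵥ x‖ := by
          rw [dot_star_comm, RCLike.star_def, Complex.norm_conj]
        rw [hx]
        exact abs_prod_le_sum (t := fun i => ‖star (u i) ⬝ᵥ x‖)
          (fun i => norm_nonneg _) j k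
    _ = (∑ j, ∑ k, ‖c j k‖) * s := by
        rw [Finset.sum_mul]
        exact Finset.sum_congr rfl fun j _ => by rw [Finset.sum_mul]

lemma qform_spectral_re {n : Type*} [Fintype n] (lam : n → ℝ) (u : n → n → ℂ) (x : n → ℂ) :
    (star x ⬝ᵥ ((∑ j, (lam j : ℂ) • Matrix.vecMulVec (u j) (star (u j))) *ᵥ x)).re
      = ∑ j, lam j * ‖star (u j) ⬝ᵥ x‖ ^ 2 := by
  rw [sum_mulVec', dotProduct_sum']
  rw [Complex.re_sum]
  refine Finset.sum_congr rfl fun j _ => ?_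
  rw [Matrix.smul_mulVec, vecMulVec_mulVec, dotProduct_smul, dotProduct_smul]
  have h1 : star x ⬝ᵥ u j = star (star (u j) ⬝ᵥ x) := dot_star_comm _ _
  rw [h1]
  set t := star (u j) ⬝ᵥ x
  have hst : (star t) * t = ((‖t‖ ^ 2 : ℝ) : ℂ) := by
    rw [show ((‖t‖ ^ 2 : ℝ) : ℂ) = ((Complex.normSq t : ℝ) : ℂ) by rw [Complex.sq_norm]]
    rw [RCLike.star_def, ← Complex.normSq_eq_conj_mul_self]
  have : (lam j : ℂ) • (t • star t) = ((lam j * ‖t‖ ^ 2 : ℝ) : ℂ) := by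
    simp only [smul_eq_mul]
    rw [mul_comm t (star t), hst]
    push_cast
    ring
  rw [this, Complex.ofReal_re]


lemma Asum_zero (u : Fin 3 → (Fin 2 × Fin 2 → ℂ)) : Asum 0 u = 0 := by
  ext p q; simp [Asum]

lemma Asum_neg (c : Matrix (Fin 3) (Fin 3) ℂ) (u : Fin 3 → (Fin 2 × Fin 2 → ℂ)) :
    Asum (-c) u = - Asum c u := by
  have : (-c) = c - c - c := by abel
  rw [this, Asum_sub, Asum_sub]
  abel

lemma trace_eq_trace_ptrL (X : Matrix (Fin 2 × Fin 2) (Fin 2 × Fin 2) ℂ) :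
    X.trace = (ptrL X).trace := by
  simp only [Matrix.trace, Matrix.diag, ptrL, Matrix.of_apply]
  rw [Fintype.sum_prod_type]
  rw [Finset.sum_comm]

lemma trace_vecMulVec {n : Type*} [Fintype n] (a b : n → ℂ) :
    (Matrix.vecMulVec a b).trace = b ⬝ᵥ a := by
  simp [Matrix.trace, Matrix.diag, Matrix.vecMulVec_apply, dotProduct, mul_comm]

/-- Hermitization: a nonzero Hermitian perturbation with vanishing partial traces. -/
lemma exists_A (u : Fin 3 → (Fin 2 × Fin 2 → ℂ))
    (hu : ∀ j l, star (u j) ⬝ᵥ u l = if j = l then (1:ℂ) else 0) :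
    ∃ c : Matrix (Fin 3) (Fin 3) ℂ, cᴴ = c ∧ Asum c u ≠ 0 ∧
      ptrL (Asum c u) = 0 ∧ ptrR (Asum c u) = 0 := by
  obtain ⟨c₀, hc0, hL, hR⟩ := exists_coeff u
  have hconjL : ptrL (Asum c₀ᴴ u) = 0 := by
    rw [← Asum_conjTranspose, ptrL_conjTranspose, hL, Matrix.conjTranspose_zero]
  have hconjR : ptrR (Asum c₀ᴴ u) = 0 := by
    rw [← Asum_conjTranspose, ptrR_conjTranspose, hR, Matrix.conjTranspose_zero]
  by_cases h1 : c₀ + c₀ᴴ = 0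
  · set c : Matrix (Fin 3) (Fin 3) ℂ := Complex.I • (c₀ - c₀ᴴ) with hc
    have hcH : cᴴ = c := by
      ext j k
      simp only [hc, Matrix.conjTranspose_apply, Matrix.smul_apply, Matrix.sub_apply,
        smul_eq_mul, star_mul', RCLike.star_def, Complex.conj_I, map_sub, Complex.conj_conj]
      ring
    have hcne : c ≠ 0 := by
      intro h
      rcases smul_eq_zero.mp h with h' | h'
      · exact Complex.I_ne_zero h'
      · have h2 : c₀ = c₀ᴴ := sub_eq_zero.mp h'
        have h3 : (2 : ℂ) • c₀ = 0 := by
          rw [two_smul]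
          nth_rewrite 2 [h2]
          exact h1
        rcases smul_eq_zero.mp h3 with h4 | h4
        · norm_num at h4
        · exact hc0 h4
    refine ⟨c, hcH, ?_, ?_, ?_⟩
    · intro h
      exact hcne (Asum_inj c u hu h)
    · rw [hc, Asum_smul, Asum_sub, ptrL_smul, ptrL_sub, hL, hconjL, sub_self, smul_zero]
    · rw [hc, Asum_smul, Asum_sub, ptrR_smul, ptrR_sub, hR, hconjR, sub_self, smul_zero]
  · set c : Matrix (Fin 3) (Fin 3) ℂ := c₀ + c₀ᴴ with hc
    have hcH : cᴴ = c := by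
      rw [hc, Matrix.conjTranspose_add, Matrix.conjTranspose_conjTranspose, add_comm]
    refine ⟨c, hcH, ?_, ?_, ?_⟩
    · intro h
      exact h1 (Asum_inj c u hu h)
    · rw [hc, Asum_add, ptrL_add, hL, hconjL, add_zero]
    · rw [hc, Asum_add, ptrR_add, hR, hconjR, add_zero]

/-- The central positivity estimate: `q•M + Asum c (u ∘ g)` is PSD when the total weight of
`c` is at most `q * p`. -/
lemma psd_q_smul_add_Asum {M : Matrix (Fin 2 × Fin 2) (Fin 2 × Fin 2) ℂ}
    (lam : Fin 2 × Fin 2 → ℝ) (u : Fin 2 × Fin 2 → (Fin 2 × Fin 2 → ℂ))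
    (hMdec : M = ∑ j, (lam j : ℂ) • Matrix.vecMulVec (u j) (star (u j)))
    (hM : M.PosSemidef)
    (g : Fin 3 → Fin 2 × Fin 2) (hg : Function.Injective g)
    (c : Matrix (Fin 3) (Fin 3) ℂ) (hc : cᴴ = c)
    (p q : ℝ) (hp : 0 ≤ p) (hq : 0 ≤ q) (hplam : ∀ i, p ≤ lam (g i)) (hlam : ∀ j, 0 ≤ lam j)
    (hC : (∑ j, ∑ k, ‖c j k‖) ≤ q * p) :
    ((q : ℂ) • M + Asum c (fun i => u (g i))).PosSemidef := by
  have hAherm : (Asum c (fun i => u (g i))).IsHermitian := by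
    unfold Matrix.IsHermitian
    rw [Asum_conjTranspose, hc]
  refine psd_add_of_abs_le (psd_real_smul hM hq) hAherm ?_
  intro x
  set t : Fin 2 × Fin 2 → ℝ := fun j => ‖star (u j) ⬝ᵥ x‖ with ht
  set s : ℝ := ∑ i : Fin 3, ‖star (u (g i)) ⬝ᵥ x‖ ^ 2 with hs
  have hs0 : 0 ≤ s := Finset.sum_nonneg fun i _ => sq_nonneg _
  have hb1 : ‖star x ⬝ᵥ (Asum c (fun i => u (g i)) *ᵥ x)‖ ≤
      (∑ j, ∑ k, ‖c j k‖) * s := Asum_qform_bound c _ x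
  have hre : (star x ⬝ᵥ (((q : ℂ) • M) *ᵥ x)).re = q * ∑ j, lam j * t j ^ 2 := by
    rw [Matrix.smul_mulVec, dotProduct_smul, smul_eq_mul, Complex.mul_re]
    simp only [Complex.ofReal_re, Complex.ofReal_im, zero_mul, sub_zero]
    congr 1
    rw [hMdec, qform_spectral_re]
  have hps : p * s ≤ ∑ j, lam j * t j ^ 2 := by
    have e1 : p * s = ∑ i : Fin 3, p * t (g i) ^ 2 := by
      rw [hs, Finset.mul_sum]
    have e2 : (∑ i : Fin 3, p * t (g i) ^ 2) ≤ ∑ i : Fin 3, lam (g i) * t (g i) ^ 2 :=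
      Finset.sum_le_sum fun i _ => mul_le_mul_of_nonneg_right (hplam i) (sq_nonneg _)
    have e3 : (∑ i : Fin 3, lam (g i) * t (g i) ^ 2)
        = ∑ j ∈ Finset.univ.image g, lam j * t j ^ 2 := by
      rw [Finset.sum_image (fun a _ b _ h => hg h)]
    have e4 : (∑ j ∈ Finset.univ.image g, lam j * t j ^ 2) ≤ ∑ j, lam j * t j ^ 2 :=
      Finset.sum_le_sum_of_subset_of_nonneg (Finset.subset_univ _)
        (fun j _ _ => mul_nonneg (hlam j) (sq_nonneg _))
    rw [e1]
    calc (∑ i : Fin 3, p * t (g i) ^ 2) ≤ _ := e2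
    _ = _ := e3
    _ ≤ _ := e4
  calc ‖star x ⬝ᵥ (Asum c (fun i => u (g i)) *ᵥ x)‖
      ≤ (∑ j, ∑ k, ‖c j k‖) * s := hb1
    _ ≤ (q * p) * s := mul_le_mul_of_nonneg_right hC hs0
    _ = q * (p * s) := by ring
    _ ≤ q * ∑ j, lam j * t j ^ 2 := mul_le_mul_of_nonneg_left hps hq
    _ = (star x ⬝ᵥ (((q : ℂ) • M) *ᵥ x)).re := hre.symm

lemma sum_ite_pair {α M : Type*} [Fintype α] [DecidableEq α] [AddCommMonoid M]
    {i₀ i₁ : α} (hne : i₀ ≠ i₁) (F : α → M) (a b : M)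
    (hF : ∀ i, F i = (if i = i₀ then a else if i = i₁ then b else 0)) :
    ∑ i, F i = a + b := by
  have key : ∀ i, F i = (if i = i₀ then a else 0) + (if i = i₁ then b else 0) := by
    intro i
    rw [hF i]
    by_cases h0 : i = i₀
    · subst h0
      rw [if_pos rfl, if_pos rfl, if_neg hne, add_zero]
    · rw [if_neg h0, if_neg h0, zero_add]
  rw [Finset.sum_congr rfl fun i _ => key i, Finset.sum_add_distrib]
  rw [Finset.sum_ite_eq' Finset.univ i₀ fun _ => a, Finset.sum_ite_eq' Finset.univ i₁ fun _ => b]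
  simp

/-- The main construction lemma: a PSD perturbation of `M ⊗ N`. -/
lemma combo {M N : Matrix (Fin 2 × Fin 2) (Fin 2 × Fin 2) ℂ}
    (hM : M.PosSemidef) (hN : N.PosSemidef) (hrM : 3 ≤ M.rank) (hrN : 2 ≤ N.rank) :
    ∃ X Y : Matrix (Fin 2 × Fin 2) (Fin 2 × Fin 2) ℂ,
      (M ⊗ₖ N + X ⊗ₖ Y).PosSemidef ∧
      X.trace = 0 ∧ Y.trace = 0 ∧ ptrL X = 0 ∧ ptrR X = 0 ∧ X ≠ 0 ∧ Y ≠ 0 := by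
  obtain ⟨u, lam, g, hu, hMdec, hlam, hg, hgpos⟩ := spectral_package hM 3 hrM
  obtain ⟨v, mu, g2, hv, hNdec, hmu, hg2, hg2pos⟩ := spectral_package hN 2 hrN
  set u' : Fin 3 → (Fin 2 × Fin 2 → ℂ) := fun i => u (g i) with hu'def
  have hu' : ∀ j l, star (u' j) ⬝ᵥ u' l = if j = l then (1:ℂ) else 0 := by
    intro j l
    rw [hu'def]
    simp only
    rw [hu (g j) (g l)]
    simp [hg.eq_iff]
  obtain ⟨c, hcH, hAne, hL, hR⟩ := exists_A u' hu'
  set p : ℝ := min (min (lam (g 0)) (lam (g 1))) (lam (g 2)) with hpdef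
  have hp : 0 < p := lt_min (lt_min (hgpos 0) (hgpos 1)) (hgpos 2)
  have hplam : ∀ i, p ≤ lam (g i) := by
    intro i
    fin_cases i
    · exact le_trans (min_le_left _ _) (min_le_left _ _)
    · exact le_trans (min_le_left _ _) (min_le_right _ _)
    · exact min_le_right _ _
  set q : ℝ := min (mu (g2 0)) (mu (g2 1)) with hqdef
  have hq : 0 < q := lt_min (hg2pos 0) (hg2pos 1)
  set C : ℝ := ∑ j, ∑ k, ‖c j k‖ with hCdef
  have hC0 : 0 ≤ C :=
    Finset.sum_nonneg fun j _ => Finset.sum_nonneg fun k _ => norm_nonneg _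
  set ε : ℝ := q * p / (C + 1) with hεdef
  have hε : 0 < ε := div_pos (mul_pos hq hp) (by linarith)
  set c' : Matrix (Fin 3) (Fin 3) ℂ := ((ε : ℂ)) • c with hc'def
  have hc'H : c'ᴴ = c' := by
    rw [hc'def, Matrix.conjTranspose_smul, hcH]
    congr 1
    simp [RCLike.star_def, Complex.conj_ofReal]
  have hc'abs : (∑ j, ∑ k, ‖c' j k‖) = ε * C := by
    rw [hCdef, Finset.mul_sum]
    refine Finset.sum_congr rfl fun j _ => ?_
    rw [Finset.mul_sum]
    refine Finset.sum_congr rfl fun k _ => ?_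
    rw [hc'def]
    simp only [Matrix.smul_apply, smul_eq_mul, norm_mul, Complex.norm_real, Real.norm_eq_abs]
    rw [abs_of_nonneg hε.le]
  have hεC : ε * C ≤ q * p := by
    rw [hεdef]
    rw [div_mul_eq_mul_div, div_le_iff₀ (by linarith : (0:ℝ) < C + 1)]
    have : 0 ≤ q * p := (mul_pos hq hp).le
    nlinarith
  set X : Matrix (Fin 2 × Fin 2) (Fin 2 × Fin 2) ℂ := Asum c' u' with hXdef
  set P : (Fin 2 × Fin 2) → Matrix (Fin 2 × Fin 2) (Fin 2 × Fin 2) ℂ :=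
    fun i => Matrix.vecMulVec (v i) (star (v i)) with hPdef
  set Y : Matrix (Fin 2 × Fin 2) (Fin 2 × Fin 2) ℂ := P (g2 0) - P (g2 1) with hYdef
  have hXc : X = (ε : ℂ) • Asum c u' := by rw [hXdef, hc'def, Asum_smul]
  have hXL : ptrL X = 0 := by rw [hXc, ptrL_smul, hL, smul_zero]
  have hXR : ptrR X = 0 := by rw [hXc, ptrR_smul, hR, smul_zero]
  have hXne : X ≠ 0 := by
    rw [hXc]
    refine smul_ne_zero ?_ hAne
    simpa using hε.ne'
  have hg2ne : g2 0 ≠ g2 1 := fun h => absurd (hg2 h) (by decide)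
  have hYne : Y ≠ 0 := by
    intro h
    have h1 : star (v (g2 0)) ⬝ᵥ (Y *ᵥ (v (g2 0))) = 1 := by
      rw [hYdef, Matrix.sub_mulVec, dotProduct_sub, hPdef]
      simp only
      rw [vecMulVec_mulVec, vecMulVec_mulVec, dotProduct_smul, dotProduct_smul]
      simp [hv, Ne.symm hg2ne]
    rw [h] at h1
    simp at h1
  have hXtr : X.trace = 0 := by rw [trace_eq_trace_ptrL, hXL, Matrix.trace_zero]
  have hYtr : Y.trace = 0 := by
    rw [hYdef, Matrix.trace_sub, hPdef]
    simp only
    rw [trace_vecMulVec, trace_vecMulVec, hv, hv]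
    simp
  refine ⟨X, Y, ?_, hXtr, hYtr, hXL, hXR, hXne, hYne⟩
  -- positivity
  set d : (Fin 2 × Fin 2) → Matrix (Fin 3) (Fin 3) ℂ :=
    fun i => if i = g2 0 then c' else if i = g2 1 then -c' else 0 with hddef
  set T : (Fin 2 × Fin 2) → Matrix (Fin 2 × Fin 2) (Fin 2 × Fin 2) ℂ :=
    fun i => (mu i : ℂ) • M + Asum (d i) u' with hTdef
  have hKeq : M ⊗ₖ N + X ⊗ₖ Y = ∑ i, T i ⊗ₖ P i := by
    have e1 : ∀ i, T i ⊗ₖ P i = ((mu i : ℂ) • M) ⊗ₖ P i + (Asum (d i) u') ⊗ₖ P i := by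
      intro i
      rw [hTdef]
      simp only
      rw [Matrix.add_kronecker]
    rw [Finset.sum_congr rfl fun i _ => e1 i, Finset.sum_add_distrib]
    have e2 : (∑ i, ((mu i : ℂ) • M) ⊗ₖ P i) = M ⊗ₖ N := by
      ext pq rs
      obtain ⟨a, b⟩ := pq
      obtain ⟨a', b'⟩ := rs
      rw [hNdec]
      simp only [Matrix.sum_apply, Matrix.kroneckerMap_apply, Matrix.smul_apply, smul_eq_mul,
        Matrix.vecMulVec_apply, Pi.star_apply, hPdef, Finset.mul_sum]
      exact Finset.sum_congr rfl fun i _ => by ring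
    have e3 : (∑ i, (Asum (d i) u') ⊗ₖ P i) = X ⊗ₖ Y := by
      have hF : ∀ i, (Asum (d i) u') ⊗ₖ P i =
          (if i = g2 0 then X ⊗ₖ P (g2 0) else if i = g2 1 then (-X) ⊗ₖ P (g2 1) else 0) := by
        intro i
        rw [hddef]
        simp only
        by_cases h0 : i = g2 0
        · subst h0
          rw [if_pos rfl, if_pos rfl, hXdef]
        · rw [if_neg h0, if_neg h0]
          by_cases h1 : i = g2 1
          · subst h1
            rw [if_pos rfl, if_pos rfl, Asum_neg, ← hXdef]
          · rw [if_neg h1, if_neg h1, Asum_zero, Matrix.zero_kronecker]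
      rw [sum_ite_pair hg2ne _ _ _ hF]
      ext pq rs
      obtain ⟨a, b⟩ := pq
      obtain ⟨a', b'⟩ := rs
      rw [hYdef]
      simp only [Matrix.add_apply, Matrix.kroneckerMap_apply, Matrix.neg_apply,
        Matrix.sub_apply]
      ring
    rw [e2, e3]
  rw [hKeq]
  refine psd_sum _ fun i => ?_
  have hP : (P i).PosSemidef := psd_vecMulVec (v i)
  refine psd_kron ?_ hP
  rw [hTdef]
  simp only
  rw [hddef]
  simp only
  by_cases h0 : i = g2 0
  · subst h0
    rw [if_pos rfl]
    refine psd_q_smul_add_Asum lam u hMdec hM g hg c' hc'H p (mu (g2 0)) hp.le (hmu _)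
      hplam hlam ?_
    rw [hc'abs]
    calc ε * C ≤ q * p := hεC
      _ ≤ mu (g2 0) * p := mul_le_mul_of_nonneg_right (min_le_left _ _) hp.le
  · rw [if_neg h0]
    by_cases h1 : i = g2 1
    · subst h1
      rw [if_pos rfl]
      have hnegH : (-c')ᴴ = -c' := by rw [Matrix.conjTranspose_neg, hc'H]
      refine psd_q_smul_add_Asum lam u hMdec hM g hg (-c') hnegH p (mu (g2 1)) hp.le (hmu _)
        hplam hlam ?_
      have habs : (∑ j, ∑ k, ‖(-c') j k‖) = ε * C := by
        rw [← hc'abs]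
        exact Finset.sum_congr rfl fun j _ => Finset.sum_congr rfl fun k _ => by
          simp [Matrix.neg_apply]
      rw [habs]
      calc ε * C ≤ q * p := hεC
        _ ≤ mu (g2 1) * p := mul_le_mul_of_nonneg_right (min_le_right _ _) hp.le
    · rw [if_neg h1, Asum_zero, add_zero]
      exact psd_real_smul hM (hmu i)
def pairEquiv (S : Finset (Fin 4)) (i₀ i₁ : Fin 4) (h01 : i₀ ≠ i₁)
    (hmem : ∀ j : Fin 4, j ∉ S ↔ (j = i₀ ∨ j = i₁)) :
    ((i : {j : Fin 4 // j ∉ S}) → Fin 2) ≃ (Fin 2 × Fin 2) where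
  toFun z := (z ⟨i₀, (hmem i₀).mpr (Or.inl rfl)⟩, z ⟨i₁, (hmem i₁).mpr (Or.inr rfl)⟩)
  invFun p i := if i.1 = i₀ then p.1 else p.2
  left_inv z := by
    funext i
    obtain ⟨i, hi⟩ := i
    rcases (hmem i).mp hi with h | h <;> subst h <;> simp [h01, Ne.symm h01]
  right_inv p := by
    have : i₁ ≠ i₀ := Ne.symm h01
    simp [this]

lemma sum_split (S : Finset (Fin 4)) (i₀ i₁ : Fin 4) (h01 : i₀ ≠ i₁)
    (hmem : ∀ j : Fin 4, j ∉ S ↔ (j = i₀ ∨ j = i₁)) (f : Fin 2 → Fin 2 → ℂ) :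
    (∑ z : (i : {j : Fin 4 // j ∉ S}) → Fin 2,
      f (z ⟨i₀, (hmem i₀).mpr (Or.inl rfl)⟩) (z ⟨i₁, (hmem i₁).mpr (Or.inr rfl)⟩))
      = ∑ a, ∑ b, f a b := by
  calc (∑ z : (i : {j : Fin 4 // j ∉ S}) → Fin 2,
      f (z ⟨i₀, (hmem i₀).mpr (Or.inl rfl)⟩) (z ⟨i₁, (hmem i₁).mpr (Or.inr rfl)⟩))
      = ∑ p : Fin 2 × Fin 2, f p.1 p.2 :=
        Fintype.sum_equiv (pairEquiv S i₀ i₁ h01 hmem) _ _ (fun z => rfl)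
    _ = ∑ a, ∑ b, f a b := Fintype.sum_prod_type _

section compat
variable (ρ σ : MState (fun _ : Fin 4 => 2)) (X Y : Matrix (Fin 2 × Fin 2) (Fin 2 × Fin 2) ℂ)

lemma compat01 (hσ : ∀ v w, σ v w = ρ v w + X (v 0, v 1) (w 0, w 1) * Y (v 2, v 3) (w 2, w 3))
    (hY : Y.trace = 0) :
    marginal ({0, 1} : Finset (Fin 4)) ρ = marginal {0, 1} σ := by
  funext x y
  simp only [marginal, Matrix.of_apply, hσ]
  rw [Finset.sum_add_distrib]
  symm
  rw [add_eq_left]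
  simp only [show ((0:Fin 4) ∈ ({0,1} : Finset (Fin 4))) = True by simp,
    show ((1:Fin 4) ∈ ({0,1} : Finset (Fin 4))) = True by simp,
    show ((2:Fin 4) ∈ ({0,1} : Finset (Fin 4))) = False by decide,
    show ((3:Fin 4) ∈ ({0,1} : Finset (Fin 4))) = False by decide,
    dite_true, dite_false]
  rw [← Finset.mul_sum]
  rw [sum_split _ 2 3 (by decide) (by decide) (fun a b => Y (a, b) (a, b))]
  have htr : Y.trace = ∑ a : Fin 2, ∑ b : Fin 2, Y (a, b) (a, b) := by
    simp only [Matrix.trace, Matrix.diag]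
    exact Fintype.sum_prod_type _
  rw [← htr, hY, mul_zero]

lemma compat23 (hσ : ∀ v w, σ v w = ρ v w + X (v 0, v 1) (w 0, w 1) * Y (v 2, v 3) (w 2, w 3))
    (hX : X.trace = 0) :
    marginal ({2, 3} : Finset (Fin 4)) ρ = marginal {2, 3} σ := by
  funext x y
  simp only [marginal, Matrix.of_apply, hσ]
  rw [Finset.sum_add_distrib]
  symm
  rw [add_eq_left]
  simp only [show ((2:Fin 4) ∈ ({2,3} : Finset (Fin 4))) = True by simp,
    show ((3:Fin 4) ∈ ({2,3} : Finset (Fin 4))) = True by simp,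
    show ((0:Fin 4) ∈ ({2,3} : Finset (Fin 4))) = False by decide,
    show ((1:Fin 4) ∈ ({2,3} : Finset (Fin 4))) = False by decide,
    dite_true, dite_false]
  rw [← Finset.sum_mul]
  rw [sum_split _ 0 1 (by decide) (by decide) (fun a b => X (a, b) (a, b))]
  have htr : X.trace = ∑ a : Fin 2, ∑ b : Fin 2, X (a, b) (a, b) := by
    simp only [Matrix.trace, Matrix.diag]
    exact Fintype.sum_prod_type _
  rw [← htr, hX, zero_mul]

lemma compat02 (hσ : ∀ v w, σ v w = ρ v w + X (v 0, v 1) (w 0, w 1) * Y (v 2, v 3) (w 2, w 3))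
    (hd : (ptrL X = 0 ∧ ptrR X = 0) ∨ (ptrL Y = 0 ∧ ptrR Y = 0)) :
    marginal ({0, 2} : Finset (Fin 4)) ρ = marginal {0, 2} σ := by
  funext x y
  simp only [marginal, Matrix.of_apply, hσ]
  rw [Finset.sum_add_distrib]
  symm
  rw [add_eq_left]
  simp only [show ((0:Fin 4) ∈ ({0,2} : Finset (Fin 4))) = True by simp,
    show ((2:Fin 4) ∈ ({0,2} : Finset (Fin 4))) = True by simp,
    show ((1:Fin 4) ∈ ({0,2} : Finset (Fin 4))) = False by decide,
    show ((3:Fin 4) ∈ ({0,2} : Finset (Fin 4))) = False by decide,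
    dite_true, dite_false]
  rw [sum_split _ 1 3 (by decide) (by decide)
    (fun a b => X (x ⟨0, by simp⟩, a) (y ⟨0, by simp⟩, a) *
      Y (x ⟨2, by simp⟩, b) (y ⟨2, by simp⟩, b))]
  rw [← Finset.sum_mul_sum]
  rcases hd with ⟨h1, h2⟩ | ⟨h1, h2⟩
  · have hz : (∑ a, X (x ⟨0, by simp⟩, a) (y ⟨0, by simp⟩, a)) = 0 := by
      have := congrFun (congrFun h2 (x ⟨0, by simp⟩)) (y ⟨0, by simp⟩)
      simpa [ptrR] using this
    rw [hz, zero_mul]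
  · have hz : (∑ b, Y (x ⟨2, by simp⟩, b) (y ⟨2, by simp⟩, b)) = 0 := by
      have := congrFun (congrFun h2 (x ⟨2, by simp⟩)) (y ⟨2, by simp⟩)
      simpa [ptrR] using this
    rw [hz, mul_zero]

lemma compat03 (hσ : ∀ v w, σ v w = ρ v w + X (v 0, v 1) (w 0, w 1) * Y (v 2, v 3) (w 2, w 3))
    (hd : (ptrL X = 0 ∧ ptrR X = 0) ∨ (ptrL Y = 0 ∧ ptrR Y = 0)) :
    marginal ({0, 3} : Finset (Fin 4)) ρ = marginal {0, 3} σ := by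
  funext x y
  simp only [marginal, Matrix.of_apply, hσ]
  rw [Finset.sum_add_distrib]
  symm
  rw [add_eq_left]
  simp only [show ((0:Fin 4) ∈ ({0,3} : Finset (Fin 4))) = True by simp,
    show ((3:Fin 4) ∈ ({0,3} : Finset (Fin 4))) = True by simp,
    show ((1:Fin 4) ∈ ({0,3} : Finset (Fin 4))) = False by decide,
    show ((2:Fin 4) ∈ ({0,3} : Finset (Fin 4))) = False by decide,
    dite_true, dite_false]
  rw [sum_split _ 1 2 (by decide) (by decide)
    (fun a b => X (x ⟨0, by simp⟩, a) (y ⟨0, by simp⟩, a) *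
      Y (b, x ⟨3, by simp⟩) (b, y ⟨3, by simp⟩))]
  rw [← Finset.sum_mul_sum]
  rcases hd with ⟨h1, h2⟩ | ⟨h1, h2⟩
  · have hz : (∑ a, X (x ⟨0, by simp⟩, a) (y ⟨0, by simp⟩, a)) = 0 := by
      have := congrFun (congrFun h2 (x ⟨0, by simp⟩)) (y ⟨0, by simp⟩)
      simpa [ptrR] using this
    rw [hz, zero_mul]
  · have hz : (∑ b, Y (b, x ⟨3, by simp⟩) (b, y ⟨3, by simp⟩)) = 0 := by
      have := congrFun (congrFun h1 (x ⟨3, by simp⟩)) (y ⟨3, by simp⟩)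
      simpa [ptrL] using this
    rw [hz, mul_zero]

lemma compat12 (hσ : ∀ v w, σ v w = ρ v w + X (v 0, v 1) (w 0, w 1) * Y (v 2, v 3) (w 2, w 3))
    (hd : (ptrL X = 0 ∧ ptrR X = 0) ∨ (ptrL Y = 0 ∧ ptrR Y = 0)) :
    marginal ({1, 2} : Finset (Fin 4)) ρ = marginal {1, 2} σ := by
  funext x y
  simp only [marginal, Matrix.of_apply, hσ]
  rw [Finset.sum_add_distrib]
  symm
  rw [add_eq_left]
  simp only [show ((1:Fin 4) ∈ ({1,2} : Finset (Fin 4))) = True by simp,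
    show ((2:Fin 4) ∈ ({1,2} : Finset (Fin 4))) = True by simp,
    show ((0:Fin 4) ∈ ({1,2} : Finset (Fin 4))) = False by decide,
    show ((3:Fin 4) ∈ ({1,2} : Finset (Fin 4))) = False by decide,
    dite_true, dite_false]
  rw [sum_split _ 0 3 (by decide) (by decide)
    (fun a b => X (a, x ⟨1, by simp⟩) (a, y ⟨1, by simp⟩) *
      Y (x ⟨2, by simp⟩, b) (y ⟨2, by simp⟩, b))]
  rw [← Finset.sum_mul_sum]
  rcases hd with ⟨h1, h2⟩ | ⟨h1, h2⟩
  · have hz : (∑ a, X (a, x ⟨1, by simp⟩) (a, y ⟨1, by simp⟩)) = 0 := by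
      have := congrFun (congrFun h1 (x ⟨1, by simp⟩)) (y ⟨1, by simp⟩)
      simpa [ptrL] using this
    rw [hz, zero_mul]
  · have hz : (∑ b, Y (x ⟨2, by simp⟩, b) (y ⟨2, by simp⟩, b)) = 0 := by
      have := congrFun (congrFun h2 (x ⟨2, by simp⟩)) (y ⟨2, by simp⟩)
      simpa [ptrR] using this
    rw [hz, mul_zero]

lemma compat13 (hσ : ∀ v w, σ v w = ρ v w + X (v 0, v 1) (w 0, w 1) * Y (v 2, v 3) (w 2, w 3))
    (hd : (ptrL X = 0 ∧ ptrR X = 0) ∨ (ptrL Y = 0 ∧ ptrR Y = 0)) :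
    marginal ({1, 3} : Finset (Fin 4)) ρ = marginal {1, 3} σ := by
  funext x y
  simp only [marginal, Matrix.of_apply, hσ]
  rw [Finset.sum_add_distrib]
  symm
  rw [add_eq_left]
  simp only [show ((1:Fin 4) ∈ ({1,3} : Finset (Fin 4))) = True by simp,
    show ((3:Fin 4) ∈ ({1,3} : Finset (Fin 4))) = True by simp,
    show ((0:Fin 4) ∈ ({1,3} : Finset (Fin 4))) = False by decide,
    show ((2:Fin 4) ∈ ({1,3} : Finset (Fin 4))) = False by decide,
    dite_true, dite_false]
  rw [sum_split _ 0 2 (by decide) (by decide)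
    (fun a b => X (a, x ⟨1, by simp⟩) (a, y ⟨1, by simp⟩) *
      Y (b, x ⟨3, by simp⟩) (b, y ⟨3, by simp⟩))]
  rw [← Finset.sum_mul_sum]
  rcases hd with ⟨h1, h2⟩ | ⟨h1, h2⟩
  · have hz : (∑ a, X (a, x ⟨1, by simp⟩) (a, y ⟨1, by simp⟩)) = 0 := by
      have := congrFun (congrFun h1 (x ⟨1, by simp⟩)) (y ⟨1, by simp⟩)
      simpa [ptrL] using this
    rw [hz, zero_mul]
  · have hz : (∑ b, Y (b, x ⟨3, by simp⟩) (b, y ⟨3, by simp⟩)) = 0 := by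
      have := congrFun (congrFun h1 (x ⟨3, by simp⟩)) (y ⟨3, by simp⟩)
      simpa [ptrL] using this
    rw [hz, mul_zero]

lemma compat_of_prod (hσ : ∀ v w, σ v w = ρ v w + X (v 0, v 1) (w 0, w 1) * Y (v 2, v 3) (w 2, w 3))
    (hX : X.trace = 0) (hY : Y.trace = 0)
    (hd : (ptrL X = 0 ∧ ptrR X = 0) ∨ (ptrL Y = 0 ∧ ptrR Y = 0)) :
    kCompatible 2 ρ σ := by
  intro S hS
  obtain ⟨A, B, hAB, rfl⟩ := Finset.card_eq_two.mp hS
  fin_cases A <;> fin_cases B <;>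
    first
      | exact absurd rfl hAB
      | exact compat01 ρ σ X Y hσ hY
      | exact compat23 ρ σ X Y hσ hX
      | exact compat02 ρ σ X Y hσ hd
      | exact compat03 ρ σ X Y hσ hd
      | exact compat12 ρ σ X Y hσ hd
      | exact compat13 ρ σ X Y hσ hd
      | (rw [Finset.pair_comm]
         first
           | exact compat01 ρ σ X Y hσ hY
           | exact compat23 ρ σ X Y hσ hX
           | exact compat02 ρ σ X Y hσ hd
           | exact compat03 ρ σ X Y hσ hd
           | exact compat12 ρ σ X Y hσ hd
           | exact compat13 ρ σ X Y hσ hd)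

end compat
def splitEquiv : ((i : Fin 4) → Fin ((fun _ : Fin 4 => 2) i)) ≃ ((Fin 2 × Fin 2) × (Fin 2 × Fin 2)) where
  toFun v := ((v 0, v 1), (v 2, v 3))
  invFun p := ![p.1.1, p.1.2, p.2.1, p.2.2]
  left_inv v := by
    funext i
    fin_cases i <;> rfl
  right_inv p := rfl

lemma sum_split_prod (A B : Matrix (Fin 2 × Fin 2) (Fin 2 × Fin 2) ℂ) :
    (∑ v : (i : Fin 4) → Fin ((fun _ : Fin 4 => 2) i),
      A (v 0, v 1) (v 0, v 1) * B (v 2, v 3) (v 2, v 3)) = A.trace * B.trace := by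
  have h1 : (∑ v : (i : Fin 4) → Fin ((fun _ : Fin 4 => 2) i),
      A (v 0, v 1) (v 0, v 1) * B (v 2, v 3) (v 2, v 3))
      = ∑ p : (Fin 2 × Fin 2) × (Fin 2 × Fin 2), A p.1 p.1 * B p.2 p.2 :=
    Equiv.sum_comp splitEquiv (fun p => A p.1 p.1 * B p.2 p.2)
  rw [h1, Fintype.sum_prod_type]
  dsimp only
  simp only [Matrix.trace, Matrix.diag]
  rw [Finset.sum_mul_sum]

/-- Main assembly: a PSD window yields failure of 2-UDA. -/
lemma not_kUDA_of_window
    (ρ₁₂ : Matrix (Fin 2 × Fin 2) (Fin 2 × Fin 2) ℂ) (hρ₁₂t : ρ₁₂.trace = 1)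
    (ρ₃₄ : Matrix (Fin 2 × Fin 2) (Fin 2 × Fin 2) ℂ) (hρ₃₄t : ρ₃₄.trace = 1)
    (ρ : MState (fun _ : Fin 4 => 2))
    (hρ : ∀ v w, ρ v w = ρ₁₂ (v 0, v 1) (w 0, w 1) * ρ₃₄ (v 2, v 3) (w 2, w 3))
    (X₁ X₂ : Matrix (Fin 2 × Fin 2) (Fin 2 × Fin 2) ℂ)
    (hK : (Matrix.of fun (p q : (Fin 2 × Fin 2) × (Fin 2 × Fin 2)) =>
        ρ₁₂ p.1 q.1 * ρ₃₄ p.2 q.2 + X₁ p.1 q.1 * X₂ p.2 q.2).PosSemidef)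
    (hX₁ : X₁.trace = 0) (hX₂ : X₂.trace = 0)
    (hd : (ptrL X₁ = 0 ∧ ptrR X₁ = 0) ∨ (ptrL X₂ = 0 ∧ ptrR X₂ = 0))
    (hne₁ : X₁ ≠ 0) (hne₂ : X₂ ≠ 0) :
    ¬ kUDA 2 ρ := by
  intro hU
  set K : Matrix ((Fin 2 × Fin 2) × (Fin 2 × Fin 2)) ((Fin 2 × Fin 2) × (Fin 2 × Fin 2)) ℂ :=
    Matrix.of fun p q => ρ₁₂ p.1 q.1 * ρ₃₄ p.2 q.2 + X₁ p.1 q.1 * X₂ p.2 q.2 with hKdef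
  set σ : MState (fun _ : Fin 4 => 2) :=
    Matrix.of fun v w => ρ v w + X₁ (v 0, v 1) (w 0, w 1) * X₂ (v 2, v 3) (w 2, w 3) with hσdef
  have hσ : ∀ v w, σ v w = ρ v w + X₁ (v 0, v 1) (w 0, w 1) * X₂ (v 2, v 3) (w 2, w 3) :=
    fun v w => rfl
  have hσK : σ = K.submatrix splitEquiv splitEquiv := by
    ext v w
    rw [Matrix.submatrix_apply, hσ v w, hρ v w]
    rfl
  have hσpsd : σ.PosSemidef := by
    rw [hσK]
    exact hK.submatrix _
  have hσtr : σ.trace = 1 := by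
    have ht : σ.trace = ∑ v, σ v v := by simp [Matrix.trace, Matrix.diag]
    rw [ht]
    have : (∑ v, σ v v) = (∑ v, ρ v v) + ∑ v : (i : Fin 4) → Fin ((fun _ : Fin 4 => 2) i),
        X₁ (v 0, v 1) (v 0, v 1) * X₂ (v 2, v 3) (v 2, v 3) := by
      rw [← Finset.sum_add_distrib]
      exact Finset.sum_congr rfl fun v _ => hσ v v
    rw [this, sum_split_prod, hX₁, zero_mul, add_zero]
    have : (∑ v, ρ v v) = ∑ v : (i : Fin 4) → Fin ((fun _ : Fin 4 => 2) i),
        ρ₁₂ (v 0, v 1) (v 0, v 1) * ρ₃₄ (v 2, v 3) (v 2, v 3) :=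
      Finset.sum_congr rfl fun v _ => hρ v v
    rw [this, sum_split_prod, hρ₁₂t, hρ₃₄t, mul_one]
  have hcomp : kCompatible 2 ρ σ := compat_of_prod ρ σ X₁ X₂ hσ hX₁ hX₂ hd
  have heq : σ = ρ := hU σ ⟨hσpsd, hσtr⟩ hcomp
  -- contradiction
  have h₁ : ∃ a b, X₁ a b ≠ 0 := by
    by_contra h
    push_neg at h
    exact hne₁ (by ext a b; simpa using h a b)
  have h₂ : ∃ r s, X₂ r s ≠ 0 := by
    by_contra h
    push_neg at h
    exact hne₂ (by ext r s; simpa using h r s)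
  obtain ⟨a, b, ha⟩ := h₁
  obtain ⟨r, s, hr⟩ := h₂
  set v := splitEquiv.symm (a, r) with hv
  set w := splitEquiv.symm (b, s) with hw
  have hva : (v 0, v 1) = a := by rw [hv]; rfl
  have hvr : (v 2, v 3) = r := by rw [hv]; rfl
  have hwb : (w 0, w 1) = b := by rw [hw]; rfl
  have hws : (w 2, w 3) = s := by rw [hw]; rfl
  have := congrFun (congrFun heq v) w
  rw [hσ v w, hva, hvr, hwb, hws] at this
  have hzero : X₁ a b * X₂ r s = 0 := by linear_combination this
  exact mul_ne_zero ha hr hzero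

end FourQubitAux

/-- Let `ρ = ρ_{A₁A₂} ⊗ ρ_{A₃A₄}` be a four-qubit product of two two-qubit states.  If one
factor has rank at least 3 and the other is not pure, then `ρ` is not 2-UDA. -/
theorem fourQubit_prod_high_rank_not_twoUDA
    (ρ₁₂ : Matrix (Fin 2 × Fin 2) (Fin 2 × Fin 2) ℂ)
    (hρ₁₂p : ρ₁₂.PosSemidef) (hρ₁₂t : ρ₁₂.trace = 1)
    (ρ₃₄ : Matrix (Fin 2 × Fin 2) (Fin 2 × Fin 2) ℂ)
    (hρ₃₄p : ρ₃₄.PosSemidef) (hρ₃₄t : ρ₃₄.trace = 1)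
    (ρ : MState (fun _ : Fin 4 => 2))
    (hρ : ∀ v w, ρ v w = ρ₁₂ (v 0, v 1) (w 0, w 1) * ρ₃₄ (v 2, v 3) (w 2, w 3))
    (h : (3 ≤ ρ₁₂.rank ∧ 2 ≤ ρ₃₄.rank) ∨ (3 ≤ ρ₃₄.rank ∧ 2 ≤ ρ₁₂.rank)) :
    ¬ kUDA 2 ρ := by
  rcases h with ⟨h3, h2⟩ | ⟨h3, h2⟩
  · obtain ⟨X, Y, hK, hXtr, hYtr, hXL, hXR, hXne, hYne⟩ := FourQubitAux.combo hρ₁₂p hρ₃₄p h3 h2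
    refine FourQubitAux.not_kUDA_of_window ρ₁₂ hρ₁₂t ρ₃₄ hρ₃₄t ρ hρ X Y ?_ hXtr hYtr
      (Or.inl ⟨hXL, hXR⟩) hXne hYne
    have he : (Matrix.of fun (p q : (Fin 2 × Fin 2) × (Fin 2 × Fin 2)) =>
        ρ₁₂ p.1 q.1 * ρ₃₄ p.2 q.2 + X p.1 q.1 * Y p.2 q.2) = ρ₁₂ ⊗ₖ ρ₃₄ + X ⊗ₖ Y := by
      ext ⟨a, b⟩ ⟨c, d⟩
      simp [Matrix.kroneckerMap_apply]
    rw [he]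
    exact hK
  · obtain ⟨X, Y, hK, hXtr, hYtr, hXL, hXR, hXne, hYne⟩ := FourQubitAux.combo hρ₃₄p hρ₁₂p h3 h2
    refine FourQubitAux.not_kUDA_of_window ρ₁₂ hρ₁₂t ρ₃₄ hρ₃₄t ρ hρ Y X ?_ hYtr hXtr
      (Or.inr ⟨hXL, hXR⟩) hYne hXne
    have he : (Matrix.of fun (p q : (Fin 2 × Fin 2) × (Fin 2 × Fin 2)) =>
        ρ₁₂ p.1 q.1 * ρ₃₄ p.2 q.2 + Y p.1 q.1 * X p.2 q.2)
        = (ρ₃₄ ⊗ₖ ρ₁₂ + X ⊗ₖ Y).submatrix Prod.swap Prod.swap := by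
      ext ⟨a, b⟩ ⟨c, d⟩
      simp [Matrix.submatrix_apply, Matrix.kroneckerMap_apply, Prod.swap]
      ring
    rw [he]
    exact hK.submatrix _
end
end
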